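/- arXiv:1703.01189 — 10 statements merged into one kernel-verified Lean document; each statement's English description precedes it below -/
import Mathlib

section
/- Let K be a finite set of integers, A : K → ℝ, n > 0, θ̄₀ ∈ ℝ, and ω₀ = p/q with p ∈ ℤ and q a positive integer. If there exists k₀ ∈ K with k₀ q = 2p, then (n/(2πq)) ∫₀^{2πq/n} G(θ̄₀ + n ω₀ t, t) dt = A_{k₀} sin(2θ̄₀); if no k ∈ K satisfies k q = 2p, then (n/(2πq)) ∫₀^{2πq/n} G(θ̄₀ + n ω₀ t, t) dt = 0. -/
/-!
Along the resonant motion every harmonic `sin (2θ - k n t)` becomes `sin (2π m t / T + 2θ̄₀)`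
with `T = 2πq/n` and the integer `m = 2p - kq`. Over the period `T` such a sinusoid has mean
zero unless `m = 0`, in which case it is the constant `sin (2θ̄₀)`; and `kq = 2p` has at most
one solution `k` since `q > 0`.
-/

open Real intervalIntegral

theorem integral_sin_two_pi_int_mul_div_add (T : ℝ) (hT : T ≠ 0) (m : ℤ) (a : ℝ) :
    ∫ t in (0 : ℝ)..T, sin (2 * π * m / T * t + a) = if m = 0 then T * sin a else 0 := by
  split_ifs with hm
  · simp [hm]
  · have hc : 2 * π * m / T ≠ 0 := by positivity
    have hcycle : 2 * π * m / T * T + a = a + m * (2 * π) := by field_simp; ring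
    rw [integral_comp_mul_add sin hc a, integral_sin, mul_zero, zero_add, hcycle,
      cos_add_int_mul_two_pi, sub_self, smul_zero]

theorem mean_sin_two_pi_int_mul_div_add (T : ℝ) (hT : T ≠ 0) (m : ℤ) (a : ℝ) :
    T⁻¹ * ∫ t in (0 : ℝ)..T, sin (2 * π * m / T * t + a) = if m = 0 then sin a else 0 := by
  rw [integral_sin_two_pi_int_mul_div_add T hT, mul_ite, inv_mul_cancel_left₀ hT, mul_zero]

theorem mean_sum_mul_sin_two_pi_int_mul_div_add {ι : Type*} (s : Finset ι) (c : ι → ℝ)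
    (m : ι → ℤ) (T : ℝ) (hT : T ≠ 0) (a : ℝ) :
    T⁻¹ * ∫ t in (0 : ℝ)..T, ∑ i ∈ s, c i * sin (2 * π * m i / T * t + a)
      = ∑ i ∈ s, c i * if m i = 0 then sin a else 0 := by
  rw [integral_finsetSum fun i _ => (by fun_prop : Continuous _).intervalIntegrable _ _,
    Finset.mul_sum]
  refine Finset.sum_congr rfl fun i _ => ?_
  rw [integral_const_mul, mul_left_comm, mean_sin_two_pi_int_mul_div_add T hT]

/-- The average of the triaxial force `G(θ,t) = ∑_{k∈K} A_k sin(2θ - k n t)` along the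
unperturbed resonant motion `θ₀(t) = θ̄₀ + n ω₀ t`, with `ω₀ = p/q`, over a period `2πq/n`
selects the single resonant harmonic. -/
theorem average_of_triaxial_force_selects_resonant_harmonic
    (K : Finset ℤ) (A : ℤ → ℝ) (n : ℝ) (hn : 0 < n) (θ₀ : ℝ)
    (p : ℤ) (q : ℕ) (hq : 0 < q) (ω₀ : ℝ) (hω₀ : ω₀ = (p : ℝ) / (q : ℝ))
    (G : ℝ → ℝ → ℝ)
    (hG : ∀ θ t, G θ t = ∑ k ∈ K, A k * Real.sin (2 * θ - (k : ℝ) * n * t)) :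
    (∀ k₀ ∈ K, k₀ * (q : ℤ) = 2 * p →
      (n / (2 * Real.pi * q)) * ∫ t in (0:ℝ)..(2 * Real.pi * q / n), G (θ₀ + n * ω₀ * t) t
        = A k₀ * Real.sin (2 * θ₀)) ∧
    ((∀ k ∈ K, k * (q : ℤ) ≠ 2 * p) →
      (n / (2 * Real.pi * q)) * ∫ t in (0:ℝ)..(2 * Real.pi * q / n), G (θ₀ + n * ω₀ * t) t
        = 0) := by
  set T := 2 * π * q / n with hT
  have hT0 : T ≠ 0 := by positivity
  have hphase : ∀ k : ℤ, ∀ t, 2 * (θ₀ + n * ω₀ * t) - k * n * t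
      = 2 * π * (2 * p - k * q : ℤ) / T * t + 2 * θ₀ := by
    intro k t
    rw [hT, hω₀]
    push_cast
    field_simp
    ring
  have haverage : n / (2 * π * q) * ∫ t in (0 : ℝ)..T, G (θ₀ + n * ω₀ * t) t
      = ∑ k ∈ K, A k * if k * (q : ℤ) = 2 * p then sin (2 * θ₀) else 0 := by
    rw [← inv_div, ← hT]
    simp_rw [hG, hphase, mean_sum_mul_sin_two_pi_int_mul_div_add K A _ T hT0, sub_eq_zero, eq_comm]
  rw [haverage]
  refine ⟨fun k₀ hk₀ hres => ?_, fun hnone => Finset.sum_eq_zero fun k hk => ?_⟩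
  · have hresonant : ∀ k : ℤ, k * (q : ℤ) = 2 * p ↔ k = k₀ := fun k => by
      rw [← hres]
      exact mul_left_inj' (by positivity)
    simp_rw [hresonant, mul_ite, mul_zero, Finset.sum_ite_eq', if_pos hk₀]
  · rw [if_neg (hnone k hk), mul_zero]
end

section
/- Let K be a finite set of integers, A : K → ℝ, n > 0, ε, c, θ̄₀, Θ̄₁ ∈ ℝ, and let k₀ ∈ K satisfy A_{k₀} sin(2θ̄₀) = −c. Set ω₀ := k₀/2 and define θ₁(t) := Θ̄₁ + n ω₀ t + ε Σ_{k∈K, k≠k₀} (A_k/((k₀−k)² n²)) sin(2θ̄₀ + (k₀−k) n t). Then θ₁ is infinitely differentiable, satisfies θ₁''(t) = −ε [ G(θ̄₀ + nω₀ t, t) + c ] for all t ∈ ℝ, and the libration t ↦ θ₁(t) − n ω₀ t is periodic with period 2π/n. -/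
lemma sin_term_hasDerivAt (B a b t : ℝ) :
    HasDerivAt (fun t => B * Real.sin (a + b * t)) (B * b * Real.cos (a + b * t)) t := by
  have h1 : HasDerivAt (fun t : ℝ => a + b * t) b t := by
    simpa using ((hasDerivAt_id t).const_mul b).const_add a
  have := (Real.hasDerivAt_sin (a + b * t)).comp t h1
  simpa [mul_comm, mul_assoc, mul_left_comm] using this.const_mul B

/-- The first approximation `θ₁` of the periodic attractor at the resonance with frequency
`n ω₀ = n k₀/2`: it is smooth, satisfies `θ₁'' = -ε [G(θ̄₀ + nω₀ t, t) + c]`, and its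
libration `θ₁(t) - n ω₀ t` is `2π/n`-periodic. -/
theorem first_approximation_of_periodic_attractor
    (K : Finset ℤ) (A : ℤ → ℝ) (n : ℝ) (hn : 0 < n) (ε c θ₀bar Θ₁bar : ℝ)
    (k₀ : ℤ) (hk₀ : k₀ ∈ K) (hres : A k₀ * Real.sin (2 * θ₀bar) = -c)
    (ω₀ : ℝ) (hω₀ : ω₀ = (k₀ : ℝ) / 2)
    (G : ℝ → ℝ → ℝ)
    (hG : ∀ θ t, G θ t = ∑ k ∈ K, A k * Real.sin (2 * θ - (k : ℝ) * n * t))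
    (θ₁ : ℝ → ℝ)
    (hθ₁ : ∀ t, θ₁ t = Θ₁bar + n * ω₀ * t +
      ε * ∑ k ∈ K.erase k₀,
        (A k / (((k₀ : ℝ) - (k : ℝ))^2 * n^2)) *
          Real.sin (2 * θ₀bar + ((k₀ : ℝ) - (k : ℝ)) * n * t)) :
    ContDiff ℝ (⊤ : ℕ∞) θ₁ ∧
    (∀ t, deriv (deriv θ₁) t = -ε * (G (θ₀bar + n * ω₀ * t) t + c)) ∧
    Function.Periodic (fun t => θ₁ t - n * ω₀ * t) (2 * Real.pi / n) := by
  have hθfun : θ₁ = fun t => Θ₁bar + n * ω₀ * t +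
      ε * ∑ k ∈ K.erase k₀,
        (A k / (((k₀ : ℝ) - (k : ℝ))^2 * n^2)) *
          Real.sin (2 * θ₀bar + ((k₀ : ℝ) - (k : ℝ)) * n * t) := funext hθ₁
  subst hθfun
  set s := K.erase k₀ with hs
  set B : ℤ → ℝ := fun k => A k / (((k₀ : ℝ) - (k : ℝ))^2 * n^2) with hB
  set b : ℤ → ℝ := fun k => ((k₀ : ℝ) - (k : ℝ)) * n with hbb
  -- first derivative
  have hd1 : ∀ t, HasDerivAt (fun t => Θ₁bar + n * ω₀ * t +
      ε * ∑ k ∈ s, B k * Real.sin (2 * θ₀bar + b k * t))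
      (n * ω₀ + ε * ∑ k ∈ s, B k * b k * Real.cos (2 * θ₀bar + b k * t)) t := by
    intro t
    have h1 : HasDerivAt (fun t : ℝ => Θ₁bar + n * ω₀ * t) (n * ω₀) t := by
      simpa using ((hasDerivAt_id t).const_mul (n * ω₀)).const_add Θ₁bar
    have h2 : HasDerivAt (fun t => ∑ k ∈ s, B k * Real.sin (2 * θ₀bar + b k * t))
        (∑ k ∈ s, B k * b k * Real.cos (2 * θ₀bar + b k * t)) t :=
      HasDerivAt.fun_sum fun k _ => sin_term_hasDerivAt (B k) (2 * θ₀bar) (b k) t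
    exact h1.add (h2.const_mul ε)
  have hderiv1 : deriv (fun t => Θ₁bar + n * ω₀ * t +
      ε * ∑ k ∈ s, B k * Real.sin (2 * θ₀bar + b k * t)) =
      fun t => n * ω₀ + ε * ∑ k ∈ s, B k * b k * Real.cos (2 * θ₀bar + b k * t) :=
    funext fun t => (hd1 t).deriv
  have hd2 : ∀ t, HasDerivAt (fun t => n * ω₀ +
      ε * ∑ k ∈ s, B k * b k * Real.cos (2 * θ₀bar + b k * t))
      (ε * ∑ k ∈ s, -(B k * b k * b k) * Real.sin (2 * θ₀bar + b k * t)) t := by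
    intro t
    have h2 : HasDerivAt (fun t => ∑ k ∈ s, B k * b k * Real.cos (2 * θ₀bar + b k * t))
        (∑ k ∈ s, -(B k * b k * b k) * Real.sin (2 * θ₀bar + b k * t)) t := by
      refine HasDerivAt.fun_sum fun k _ => ?_
      have h1 : HasDerivAt (fun t : ℝ => 2 * θ₀bar + b k * t) (b k) t := by
        simpa using ((hasDerivAt_id t).const_mul (b k)).const_add (2 * θ₀bar)
      have := (Real.hasDerivAt_cos (2 * θ₀bar + b k * t)).comp t h1
      have := this.const_mul (B k * b k)
      convert this using 1
      case e'_4 => rfl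
      case e'_8 => rfl
      ring
    simpa using (h2.const_mul ε).const_add (n * ω₀)
  have hBb : ∀ k ∈ s, B k * b k * b k = A k := by
    intro k hk
    have hk' : (k : ℤ) ≠ k₀ := Finset.ne_of_mem_erase hk
    have hne : ((k₀ : ℝ) - (k : ℝ)) ≠ 0 := by
      intro h
      apply hk'
      have h2 : (k : ℝ) = (k₀ : ℝ) := by linarith
      exact_mod_cast h2
    simp only [hB, hbb]
    rw [div_mul_eq_mul_div, div_mul_eq_mul_div, div_eq_iff (mul_ne_zero (pow_ne_zero 2 hne) (pow_ne_zero 2 hn.ne'))]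
    ring
  refine ⟨?_, ?_, ?_⟩
  · -- smoothness
    refine ContDiff.add (contDiff_const.add (contDiff_const.mul contDiff_id)) ?_
    exact contDiff_const.mul (ContDiff.sum fun k _ =>
      contDiff_const.mul (Real.contDiff_sin.comp
        (contDiff_const.add (contDiff_const.mul contDiff_id))))
  · intro t
    rw [hderiv1, (hd2 t).deriv, hG]
    have h2ω : 2 * ω₀ = (k₀ : ℝ) := by rw [hω₀]; ring
    have hGsum : ∀ k : ℤ, 2 * (θ₀bar + n * ω₀ * t) - (k : ℝ) * n * t
        = 2 * θ₀bar + b k * t := by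
      intro k; simp only [hbb, hω₀]; ring
    have : (∑ k ∈ K, A k * Real.sin (2 * (θ₀bar + n * ω₀ * t) - (k : ℝ) * n * t))
        = A k₀ * Real.sin (2 * θ₀bar) + ∑ k ∈ s, A k * Real.sin (2 * θ₀bar + b k * t) := by
      rw [← Finset.add_sum_erase K _ hk₀, ← hs]
      congr 1
      · congr 1; rw [hGsum k₀]; simp [hbb]
      · exact Finset.sum_congr rfl fun k _ => by rw [hGsum k]
    rw [this, hres]
    rw [Finset.sum_congr rfl fun k hk => by rw [neg_mul, hBb k hk]]
    rw [Finset.sum_neg_distrib]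
    ring
  · intro t
    simp only
    have key : ∀ k ∈ s, Real.sin (2 * θ₀bar + b k * (t + 2 * Real.pi / n))
        = Real.sin (2 * θ₀bar + b k * t) := by
      intro k hk
      have : b k * (t + 2 * Real.pi / n) = b k * t + ((k₀ - k : ℤ) : ℝ) * (2 * Real.pi) := by
        simp only [hbb]
        field_simp
        push_cast
        ring
      rw [this, ← add_assoc, Real.sin_add_int_mul_two_pi]
    rw [Finset.sum_congr rfl fun k hk => by rw [key k hk]]
    ring
end

section
/- Let ω₁, ω₂ be nonzero real numbers such that ω₁/ω₂ is irrational, and let f : ℝ × ℝ → ℝ be continuous and 2π-periodic in each of its two arguments. Then lim_{T→+∞} (1/T) ∫₀ᵀ f(ω₁ t, ω₂ t) dt = (1/(4π²)) ∫₀^{2π} ∫₀^{2π} f(ψ₁, ψ₂) dψ₁ dψ₂. -/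
/-!
Along the linear flow `t ↦ (ω₁ t, ω₂ t)` the character `e^{i(m ψ₁ + n ψ₂)}` of the torus becomes
`e^{i(m ω₁ + n ω₂) t}`. Since `ω₁ / ω₂` is irrational its frequency vanishes only for `m = n = 0`,
so its time average tends to its torus average (`1` or `0`). Both averages are linear functionals
of norm at most `1` on `C(𝕋², ℂ)`, and by Stone–Weierstrass the characters span a dense subspace,
so the convergence extends to every continuous function.
-/

open Filter Topology MeasureTheory Set Submodule

section DenseSpan

variable {𝕜 E F ι : Type*} [NontriviallyNormedField 𝕜] [NormedAddCommGroup E] [NormedSpace 𝕜 E]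
  [NormedAddCommGroup F] [NormedSpace 𝕜 F]

theorem ContinuousLinearMap.tendsto_apply_of_dense_span {L : ι → E →L[𝕜] F} {L₀ : E →L[𝕜] F}
    {l : Filter ι} {C : ℝ} (hL : ∀ i, ‖L i‖ ≤ C) {s : Set E} (hs : Dense (span 𝕜 s : Set E))
    (h : ∀ x ∈ s, Tendsto (L · x) l (𝓝 (L₀ x))) (x : E) :
    Tendsto (L · x) l (𝓝 (L₀ x)) := by
  have hequi : Equicontinuous ((↑) ∘ L : ι → E → F) :=
    ((NormedSpace.equicontinuous_TFAE L).out 5 1).mp (by exact ⟨C, hL⟩)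
  have hclosed : IsClosed {x | Tendsto (L · x) l (𝓝 (L₀ x))} :=
    hequi.isClosed_setOfPred_tendsto L₀.continuous
  have hspan : (span 𝕜 s : Set E) ⊆ {x | Tendsto (L · x) l (𝓝 (L₀ x))} := by
    intro x hx
    induction hx using Submodule.span_induction with
    | mem x hx => exact h x hx
    | zero => simpa using tendsto_const_nhds
    | add x y _ _ hx hy => simpa using hx.add hy
    | smul c x _ hx => simpa using hx.const_smul c
  exact hclosed.closure_subset_iff.mpr hspan (hs x)

end DenseSpan

namespace ContinuousMap

variable {X E : Type*} [TopologicalSpace X] [CompactSpace X] [MeasurableSpace X]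
  [OpensMeasurableSpace X] [NormedAddCommGroup E]

theorem integrable (g : C(X, E)) (μ : Measure X) [IsFiniteMeasure μ] : Integrable g μ :=
  g.continuous.integrable_of_hasCompactSupport (HasCompactSupport.of_compactSpace _)

variable (𝕜 : Type*) [NontriviallyNormedField 𝕜] [NormedSpace ℝ E] [NormedSpace 𝕜 E]
  [SMulCommClass ℝ 𝕜 E]

noncomputable def integralCLM (μ : Measure X) [IsFiniteMeasure μ] : C(X, E) →L[𝕜] E :=
  LinearMap.mkContinuous
    { toFun g := ∫ x, g x ∂μ
      map_add' g h := integral_add (g.integrable μ) (h.integrable μ)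
      map_smul' c g := integral_smul c _ }
    (μ.real univ) fun g => by
      rw [mul_comm]
      exact norm_integral_le_of_norm_le_const (ae_of_all _ g.norm_coe_le_norm)

variable {𝕜} in
@[simp]
theorem integralCLM_apply (μ : Measure X) [IsFiniteMeasure μ] (g : C(X, E)) :
    integralCLM 𝕜 μ g = ∫ x, g x ∂μ := rfl

theorem norm_integralCLM_le (μ : Measure X) [IsFiniteMeasure μ] :
    ‖(integralCLM 𝕜 μ : C(X, E) →L[𝕜] E)‖ ≤ μ.real univ :=
  LinearMap.mkContinuous_norm_le _ measureReal_nonneg _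

end ContinuousMap

open ContinuousMap

section TimeAverage

variable {X : Type*} [TopologicalSpace X] [CompactSpace X] [MeasurableSpace X] [BorelSpace X]

-- For `T < 0` this is `0`, not `T⁻¹ ∫_0^T`; only large `T` matter.
noncomputable def timeAverage (γ : C(ℝ, X)) (T : ℝ) : C(X, ℂ) →L[ℂ] ℂ :=
  (T⁻¹ : ℂ) • integralCLM ℂ ((volume.restrict (Ioc 0 T)).map γ)

theorem timeAverage_apply (γ : C(ℝ, X)) {T : ℝ} (hT : 0 ≤ T) (g : C(X, ℂ)) :
    timeAverage γ T g = (T⁻¹ : ℂ) * ∫ t in 0..T, g (γ t) := by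
  rw [timeAverage, _root_.smul_apply, integralCLM_apply, smul_eq_mul,
    integral_map γ.continuous.aemeasurable g.continuous.aestronglyMeasurable,
    intervalIntegral.integral_of_le hT]

theorem norm_timeAverage_le (γ : C(ℝ, X)) (T : ℝ) : ‖timeAverage γ T‖ ≤ 1 := by
  have hmass : ((volume.restrict (Ioc 0 T)).map γ).real univ = max T 0 := by
    rw [measureReal_def, Measure.map_apply γ.continuous.measurable MeasurableSet.univ,
      preimage_univ, Measure.restrict_apply_univ, ← measureReal_def, Real.volume_real_Ioc, sub_zero]
  calc ‖timeAverage γ T‖ ≤ ‖(T⁻¹ : ℂ)‖ * max T 0 := by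
        rw [timeAverage, norm_smul, ← hmass]
        gcongr
        exact norm_integralCLM_le ℂ _
    _ ≤ 1 := by
        rcases le_or_gt T 0 with hT | hT
        · simp [max_eq_right hT]
        · rw [max_eq_left hT.le, norm_inv, Complex.norm_real, Real.norm_of_nonneg hT.le,
            inv_mul_cancel₀ hT.ne']

end TimeAverage

theorem Irrational.int_mul_add_int_mul_eq_zero_iff {x y : ℝ} (h : Irrational (x / y)) {m n : ℤ} :
    m * x + n * y = 0 ↔ m = 0 ∧ n = 0 := by
  refine ⟨fun hmn => ?_, by rintro ⟨rfl, rfl⟩; simp⟩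
  have hy : y ≠ 0 := by
    rintro rfl
    simp at h
  by_cases hm : m = 0
  · subst hm
    simp only [Int.cast_zero, zero_mul, zero_add, mul_eq_zero, Int.cast_eq_zero] at hmn
    exact ⟨rfl, hmn.resolve_right hy⟩
  · refine absurd ?_ (h.ne_rat (-n / m))
    have hm' : (m : ℝ) ≠ 0 := by exact_mod_cast hm
    push_cast
    field_simp
    linarith

theorem tendsto_average_exp_mul_I (a : ℝ) :
    Tendsto (fun T : ℝ => (T : ℂ)⁻¹ * ∫ t in 0..T, Complex.exp (a * Complex.I * t)) atTop
      (𝓝 (if a = 0 then 1 else 0)) := by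
  split_ifs with ha
  · subst ha
    refine tendsto_const_nhds.congr' ?_
    filter_upwards [eventually_ne_atTop 0] with T hT
    simp [hT]
  · have hc : (a * Complex.I : ℂ) ≠ 0 := by simp [ha]
    have hbound : ∀ T : ℝ, ‖∫ t in 0..T, Complex.exp (a * Complex.I * t)‖ ≤ 2 / |a| := by
      intro T
      rw [integral_exp_mul_complex hc, norm_div, norm_mul, Complex.norm_I, mul_one,
        Complex.norm_real, Real.norm_eq_abs]
      gcongr
      calc _ ≤ ‖Complex.exp (a * Complex.I * T)‖ + ‖Complex.exp (a * Complex.I * (0 : ℝ))‖ :=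
            norm_sub_le _ _
        _ = 2 := by simp [Complex.norm_exp]; norm_num
    have hinv : Tendsto (fun T : ℝ => (T : ℂ)⁻¹) atTop (𝓝 0) := by
      simpa using tendsto_ofReal_iff.mpr (tendsto_inv_atTop_zero (𝕜 := ℝ))
    exact hinv.zero_mul_isBoundedUnder_le (isBoundedUnder_of ⟨_, hbound⟩)

section Torus

variable {p : ℝ}

local notation "𝕋" => AddCircle p

open AddCircle

noncomputable def torusChar (m n : ℤ) : C(𝕋 × 𝕋, ℂ) :=
  (fourier m).comp .fst * (fourier n).comp .snd

@[simp]
theorem torusChar_apply (m n : ℤ) (z : 𝕋 × 𝕋) :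
    torusChar m n z = fourier m z.1 * fourier n z.2 := rfl

theorem torusChar_add (m n m' n' : ℤ) :
    torusChar (m + m') (n + n') = (torusChar m n * torusChar m' n' : C(𝕋 × 𝕋, ℂ)) := by
  ext z
  simp only [torusChar_apply, ContinuousMap.mul_apply, fourier_add]
  ring

theorem torusChar_zero : (torusChar 0 0 : C(𝕋 × 𝕋, ℂ)) = 1 := by
  ext z
  simp

theorem star_torusChar (m n : ℤ) : star (torusChar m n : C(𝕋 × 𝕋, ℂ)) = torusChar (-m) (-n) := by
  ext z
  simp

theorem exists_continuousMap_addCircle_prod {E : Type*} [TopologicalSpace E] (F : ℝ → ℝ → E)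
    (hF : Continuous (Function.uncurry F)) (h₁ : ∀ y, Function.Periodic (F · y) p)
    (h₂ : ∀ x, Function.Periodic (F x) p) :
    ∃ G : C(𝕋 × 𝕋, E), ∀ x y : ℝ, G (x, y) = F x y := by
  let q : C(ℝ × ℝ, 𝕋 × 𝕋) :=
    ⟨fun z => (z.1, z.2), (continuous_quotient_mk'.comp continuous_fst).prodMk
      (continuous_quotient_mk'.comp continuous_snd)⟩
  have hq : IsQuotientMap q :=
    (QuotientAddGroup.isOpenQuotientMap_mk.prodMap
      QuotientAddGroup.isOpenQuotientMap_mk).isQuotientMap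
  have hfac : Function.FactorsThrough (Function.uncurry F) q := by
    rintro ⟨x, y⟩ ⟨x', y'⟩ h
    obtain ⟨hx, hy⟩ := Prod.ext_iff.mp h
    obtain ⟨k, hk⟩ := AddSubgroup.mem_zmultiples_iff.mp (QuotientAddGroup.eq.mp hx)
    obtain ⟨l, hl⟩ := AddSubgroup.mem_zmultiples_iff.mp (QuotientAddGroup.eq.mp hy)
    have hx' : x' = x + k • p := by simp only at hk; linarith
    have hy' : y' = y + l • p := by simp only at hl; linarith
    symm
    calc F x' y' = F x' y := by rw [hy']; exact (h₂ x').zsmul l y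
      _ = F x y := by rw [hx']; exact (h₁ y).zsmul k x
  exact ⟨hq.lift ⟨_, hF⟩ hfac, fun x y => DFunLike.congr_fun (hq.lift_comp ⟨_, hF⟩ hfac) (x, y)⟩

variable (p) in
noncomputable def linearFlow (ω₁ ω₂ : ℝ) : C(ℝ, 𝕋 × 𝕋) where
  toFun t := ((ω₁ * t : ℝ), (ω₂ * t : ℝ))
  continuous_toFun := (continuous_quotient_mk'.comp (continuous_const_mul ω₁)).prodMk
    (continuous_quotient_mk'.comp (continuous_const_mul ω₂))

theorem torusChar_linearFlow (ω₁ ω₂ : ℝ) (m n : ℤ) (t : ℝ) :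
    torusChar m n (linearFlow p ω₁ ω₂ t) =
      Complex.exp (↑(2 * Real.pi * (m * ω₁ + n * ω₂) / p) * Complex.I * t) := by
  simp only [torusChar_apply, linearFlow, ContinuousMap.coe_mk, fourier_coe_apply,
    ← Complex.exp_add]
  congr 1
  push_cast
  ring

variable [hp : Fact (0 < p)]

theorem integral_fourier_haarAddCircle (n : ℤ) :
    ∫ x, fourier n x ∂(haarAddCircle : Measure 𝕋) = if n = 0 then 1 else 0 := by
  split_ifs with hn
  · simp [hn]
  · exact integral_eq_zero_of_add_right_eq_neg (fourier_add_half_inv_index hn hp.out)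

theorem integral_torusChar (m n : ℤ) :
    ∫ z, torusChar m n z ∂(haarAddCircle.prod haarAddCircle : Measure (𝕋 × 𝕋)) =
      if m = 0 ∧ n = 0 then 1 else 0 := by
  simp only [torusChar_apply]
  rw [integral_prod_mul (fun x => fourier m x) (fun y => fourier n y),
    integral_fourier_haarAddCircle, integral_fourier_haarAddCircle]
  split_ifs <;> simp_all

theorem integral_haarAddCircle_prod {E : Type*} [NormedAddCommGroup E] [NormedSpace ℝ E]
    (g : C(𝕋 × 𝕋, E)) :
    ∫ z, g z ∂(haarAddCircle.prod haarAddCircle) =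
      (p⁻¹ * p⁻¹) • ∫ x in 0..p, ∫ y in 0..p, g (x, y) := by
  have hcircle : ∀ h : 𝕋 → E, ∫ x, h x ∂haarAddCircle = p⁻¹ • ∫ x in 0..p, h x := by
    intro h
    rw [integral_haarAddCircle, ← AddCircle.intervalIntegral_preimage p 0, zero_add]
  rw [integral_prod _ (g.integrable _)]
  simp_rw [hcircle]
  rw [intervalIntegral.integral_smul, smul_smul]

theorem dense_span_torusChar :
    Dense (span ℂ (range (Function.uncurry (torusChar (p := p)))) : Set C(𝕋 × 𝕋, ℂ)) := by
  set S : Set C(𝕋 × 𝕋, ℂ) := range (Function.uncurry torusChar)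
  set A := StarAlgebra.adjoin ℂ S
  -- characters are closed under products and conjugation, so they span the algebra they generate
  have hclosure : (Submonoid.closure (S ∪ star S) : Set C(𝕋 × 𝕋, ℂ)) ⊆ S := by
    intro g hg
    induction hg using Submonoid.closure_induction with
    | mem g hg =>
      rcases hg with hg | ⟨⟨m, n⟩, hmn⟩
      · exact hg
      · refine ⟨(-m, -n), ?_⟩
        simp only [Function.uncurry_apply_pair] at hmn ⊢
        rw [← star_torusChar, hmn, star_star]
    | one => exact ⟨(0, 0), torusChar_zero⟩
    | mul g h _ _ hg hh =>
      obtain ⟨⟨m, n⟩, rfl⟩ := hg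
      obtain ⟨⟨m', n'⟩, rfl⟩ := hh
      exact ⟨(m + m', n + n'), torusChar_add m n m' n'⟩
  have hspan : Subalgebra.toSubmodule A.toSubalgebra = span ℂ S := by
    rw [StarAlgebra.adjoin_eq_span]
    exact le_antisymm (span_le.mpr (hclosure.trans subset_span))
      (span_mono (subset_union_left.trans Submonoid.subset_closure))
  have hsep : A.SeparatesPoints := by
    intro z w hzw
    have hmem : ∀ m n, ⇑(torusChar m n) ∈ (fun g : C(𝕋 × 𝕋, ℂ) => ⇑g) '' (A : Set C(𝕋 × 𝕋, ℂ)) :=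
      fun m n => ⟨_, StarAlgebra.subset_adjoin ℂ _ ⟨(m, n), rfl⟩, rfl⟩
    have hinj := injective_toCircle hp.out.ne'
    by_cases h₁ : z.1 = w.1
    · refine ⟨_, hmem 0 1, ?_⟩
      simpa [fourier_one, Circle.coe_inj] using hinj.ne fun h₂ => hzw (Prod.ext h₁ h₂)
    · refine ⟨_, hmem 1 0, ?_⟩
      simpa [fourier_one, Circle.coe_inj] using hinj.ne h₁
  have hdense : Dense (A : Set C(𝕋 × 𝕋, ℂ)) := by
    rw [dense_iff_closure_eq, ← StarSubalgebra.topologicalClosure_coe,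
      ContinuousMap.starSubalgebra_topologicalClosure_eq_top_of_separatesPoints A hsep]
    rfl
  rwa [← hspan]

theorem tendsto_timeAverage_torusChar {ω₁ ω₂ : ℝ} (hirr : Irrational (ω₁ / ω₂)) (m n : ℤ) :
    Tendsto (fun T => timeAverage (linearFlow p ω₁ ω₂) T (torusChar m n)) atTop
      (𝓝 (∫ z : 𝕋 × 𝕋, torusChar m n z ∂(haarAddCircle.prod haarAddCircle))) := by
  have hfreq : 2 * Real.pi * (m * ω₁ + n * ω₂) / p = 0 ↔ m = 0 ∧ n = 0 := by
    rw [div_eq_zero_iff, or_iff_left hp.out.ne', mul_eq_zero, or_iff_right (by positivity),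
      hirr.int_mul_add_int_mul_eq_zero_iff]
  rw [integral_torusChar, ← if_congr hfreq rfl rfl]
  refine (tendsto_average_exp_mul_I _).congr' ?_
  filter_upwards [eventually_ge_atTop 0] with T hT
  simp_rw [timeAverage_apply _ hT, torusChar_linearFlow]

theorem tendsto_timeAverage_linearFlow {ω₁ ω₂ : ℝ} (hirr : Irrational (ω₁ / ω₂))
    (g : C(𝕋 × 𝕋, ℂ)) :
    Tendsto (fun T => timeAverage (linearFlow p ω₁ ω₂) T g) atTop
      (𝓝 (∫ z, g z ∂(haarAddCircle.prod haarAddCircle))) := by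
  refine ContinuousLinearMap.tendsto_apply_of_dense_span
    (L₀ := integralCLM ℂ (haarAddCircle.prod haarAddCircle)) (norm_timeAverage_le _)
    dense_span_torusChar ?_ g
  rintro _ ⟨⟨m, n⟩, rfl⟩
  exact tendsto_timeAverage_torusChar hirr m n

end Torus

theorem time_average_eq_torus_average_general
    (ω₁ ω₂ : ℝ) (hirr : Irrational (ω₁ / ω₂))
    (f : ℝ → ℝ → ℝ) (hf : Continuous (Function.uncurry f))
    (hper₁ : ∀ x y, f (x + 2 * Real.pi) y = f x y)
    (hper₂ : ∀ x y, f x (y + 2 * Real.pi) = f x y) :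
    Tendsto (fun T : ℝ => (1 / T) * ∫ t in (0:ℝ)..T, f (ω₁ * t) (ω₂ * t)) atTop
      (nhds ((1 / (4 * Real.pi ^ 2)) *
        ∫ ψ₁ in (0:ℝ)..(2 * Real.pi), ∫ ψ₂ in (0:ℝ)..(2 * Real.pi), f ψ₁ ψ₂)) := by
  have : Fact (0 < 2 * Real.pi) := ⟨by positivity⟩
  obtain ⟨g, hg⟩ := exists_continuousMap_addCircle_prod (p := 2 * Real.pi)
    (fun x y => (f x y : ℂ)) (Complex.continuous_ofReal.comp hf)
    (fun y x => by simp [hper₁]) (fun x y => by simp [hper₂])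
  have key := tendsto_timeAverage_linearFlow hirr g
  rw [integral_haarAddCircle_prod] at key
  rw [← tendsto_ofReal_iff]
  convert key.congr' ?_ using 2
  · simp_rw [hg, intervalIntegral.integral_ofReal, Complex.real_smul]
    push_cast
    ring
  · filter_upwards [eventually_ge_atTop 0] with T hT
    simp_rw [timeAverage_apply _ hT, linearFlow, ContinuousMap.coe_mk, hg,
      intervalIntegral.integral_ofReal]
    push_cast
    ring

/-- The time average of a quasi-periodic function with two rationally independent
frequencies equals its average over the 2-torus. -/
theorem time_average_eq_torus_average
    (ω₁ ω₂ : ℝ) (hω₁ : ω₁ ≠ 0) (hω₂ : ω₂ ≠ 0) (hirr : Irrational (ω₁ / ω₂))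
    (f : ℝ → ℝ → ℝ) (hf : Continuous (Function.uncurry f))
    (hper₁ : ∀ x y, f (x + 2 * Real.pi) y = f x y)
    (hper₂ : ∀ x y, f x (y + 2 * Real.pi) = f x y) :
    Tendsto (fun T : ℝ => (1 / T) * ∫ t in (0:ℝ)..T, f (ω₁ * t) (ω₂ * t)) atTop
      (nhds ((1 / (4 * Real.pi ^ 2)) *
        ∫ ψ₁ in (0:ℝ)..(2 * Real.pi), ∫ ψ₂ in (0:ℝ)..(2 * Real.pi), f ψ₁ ψ₂)) :=
  time_average_eq_torus_average_general ω₁ ω₂ hirr f hf hper₁ hper₂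
end

section
/- Let ω ≠ 0 and let M_c, M_s : ℝ → ℝ be functions with M_c(T)/T → I_c and M_s(T)/T → I_s as T → +∞, where (I_c, I_s) ≠ (0, 0). Then the function t ↦ sin(ωt) M_c(t) − cos(ωt) M_s(t) is unbounded on [0, ∞). -/
/-!
Along the times `t` with `ω t ≡ a (mod 2π)`, the expression divided by `t` tends to
`sin a * I_c - cos a * I_s`, which is positive for a suitable phase `a` since `(I_c, I_s) ≠ 0`;
a bounded expression divided by `t` tends to `0`.
-/

open Filter Real

lemma Function.Periodic.abs_period {α : Type*} {f : ℝ → α} {c : ℝ} (h : Function.Periodic f c) :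
    Function.Periodic f |c| := by
  rcases abs_choice c with hc | hc <;> rw [hc]
  exacts [h, h.neg]

lemma exists_sin_mul_sub_cos_mul_pos {p q : ℝ} (h : (p, q) ≠ (0, 0)) :
    ∃ a, 0 < sin a * p - cos a * q := by
  rcases ne_or_eq p 0 with hp | rfl
  · rcases hp.lt_or_gt with hp | hp
    · exact ⟨-(π / 2), by simpa using hp⟩
    · exact ⟨π / 2, by simpa using hp⟩
  · have hq : q ≠ 0 := by simpa using h
    rcases hq.lt_or_gt with hq | hq
    · exact ⟨0, by simpa using hq⟩
    · exact ⟨π, by simpa using hq⟩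

lemma exists_tendsto_atTop_sin_cos_mul_eq {ω : ℝ} (hω : ω ≠ 0) (a : ℝ) :
    ∃ u : ℕ → ℝ, Tendsto u atTop atTop ∧
      ∀ n, sin (ω * u n) = sin a ∧ cos (ω * u n) = cos a := by
  set p := |ω⁻¹ * (2 * π)|
  have hp : 0 < p := abs_pos.mpr (mul_ne_zero (inv_ne_zero hω) (by positivity))
  refine ⟨fun n => a / ω + n * p,
    tendsto_atTop_add_const_left _ _ (tendsto_natCast_atTop_atTop.atTop_mul_const hp),
    fun n => ?_⟩
  have hωa : ω * (a / ω) = a := mul_div_cancel₀ a hω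
  constructor
  · simpa only [hωa] using (sin_periodic.const_mul ω).abs_period.nat_mul n (a / ω)
  · simpa only [hωa] using (cos_periodic.const_mul ω).abs_period.nat_mul n (a / ω)

lemma tendsto_div_atTop_zero_of_abs_le {f : ℝ → ℝ} {C : ℝ} (hf : ∀ t ∈ Set.Ici (0 : ℝ), |f t| ≤ C) :
    Tendsto (fun t => f t / t) atTop (nhds 0) := by
  refine squeeze_zero_norm' ?_ ((tendsto_const_nhds (x := C)).div_atTop tendsto_id)
  filter_upwards [eventually_gt_atTop 0] with t ht
  rw [norm_div, Real.norm_eq_abs, Real.norm_of_nonneg ht.le]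
  exact div_le_div_of_nonneg_right (hf t ht.le) ht.le

/-- If the linear growth rates `I_c`, `I_s` of `M_c`, `M_s` do not both vanish, then
`t ↦ sin(ωt) M_c(t) - cos(ωt) M_s(t)` is unbounded on `[0, ∞)`. -/
theorem unbounded_of_nonzero_growth_rates
    (ω : ℝ) (hω : ω ≠ 0) (Mc Ms : ℝ → ℝ) (Ic Is : ℝ)
    (hc : Tendsto (fun T : ℝ => Mc T / T) atTop (nhds Ic))
    (hs : Tendsto (fun T : ℝ => Ms T / T) atTop (nhds Is))
    (hne : (Ic, Is) ≠ (0, 0)) :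
    ¬ ∃ C : ℝ, ∀ t ∈ Set.Ici (0:ℝ),
        |Real.sin (ω * t) * Mc t - Real.cos (ω * t) * Ms t| ≤ C := by
  rintro ⟨C, hC⟩
  obtain ⟨a, ha⟩ := exists_sin_mul_sub_cos_mul_pos hne
  obtain ⟨u, hu, hsc⟩ := exists_tendsto_atTop_sin_cos_mul_eq hω a
  have hzero := (tendsto_div_atTop_zero_of_abs_le hC).comp hu
  have hlim : Tendsto
      (fun n => (sin (ω * u n) * Mc (u n) - cos (ω * u n) * Ms (u n)) / u n)
      atTop (nhds (sin a * Ic - cos a * Is)) := by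
    refine (((hc.comp hu).const_mul (sin a)).sub ((hs.comp hu).const_mul (cos a))).congr
      fun n => ?_
    simp only [Function.comp_apply, (hsc n).1, (hsc n).2]
    ring
  exact ha.ne' (tendsto_nhds_unique hlim hzero)
end

section
/- Let ω, n > 0 with ω/n irrational, let I₀ be a finite set of nonzero integers, B : I₀ → ℝ, and let γ, μ, A₃, C₀ ∈ ℝ and Φ : ℝ → ℝ be continuous. Then lim_{T→+∞} (1/T) ∫₀ᵀ cos(ωτ) [ 2 Σ_{i∈I₀} B_i sin(i n τ − C₀ sin(ωτ)) − 2γ Φ(C₀ ω cos(ωτ)) − μ C₀ sin(ωτ) + (A₃/3) C₀³ sin³(ωτ) ] dτ = −(γ/π) ∫₀^{2π} cos(ψ) Φ(C₀ ω cos ψ) dψ. -/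
/-!
The integrand splits into the terms `cos (ω τ) sin (i n τ - C₀ sin (ω τ))` and `G (ω τ)` with `G`
`2π`-periodic. Each of the former is the imaginary part of a function `f` satisfying
`f (τ + 2π/ω) = z f τ` with `|z| = 1`, and `z ≠ 1` because `i n / ω` is irrational; such an `f` has
a bounded primitive, so its average vanishes. The average of `G (ω τ)` is the mean of `G` over a
period, in which the `sin` and `sin³` terms integrate to zero.
-/

open Filter Bornology Set Real intervalIntegral Topology

theorem tendsto_one_div_mul_of_isBounded_range_sub {F : ℝ → ℝ} {L : ℝ}
    (h : IsBounded (range fun T => F T - L * T)) :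
    Tendsto (fun T => 1 / T * F T) atTop (𝓝 L) := by
  obtain ⟨C, hC⟩ := isBounded_iff_forall_norm_le.mp h
  have hdev : Tendsto (fun T => 1 / T * (F T - L * T)) atTop (𝓝 0) :=
    (tendsto_const_nhds.div_atTop tendsto_id).zero_mul_isBoundedUnder_le
      (isBoundedUnder_of ⟨C, fun T => hC _ (mem_range_self T)⟩)
  rw [← zero_add L]
  refine (hdev.add_const L).congr' ?_
  filter_upwards [eventually_ne_atTop 0] with T hT
  field_simp
  ring

theorem one_div_mul_integral_sum_mul_add {ι : Type*} (s : Finset ι) (c : ι → ℝ)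
    {f : ι → ℝ → ℝ} {g : ℝ → ℝ} (hf : ∀ i, Continuous (f i)) (hg : Continuous g) (T : ℝ) :
    1 / T * ∫ τ in (0:ℝ)..T, (∑ i ∈ s, c i * f i τ + g τ)
      = ∑ i ∈ s, c i * (1 / T * ∫ τ in (0:ℝ)..T, f i τ) + 1 / T * ∫ τ in (0:ℝ)..T, g τ := by
  have hint : ∀ v : ℝ → ℝ, Continuous v → IntervalIntegrable v MeasureTheory.volume 0 T :=
    fun v hv => hv.intervalIntegrable _ _
  rw [integral_add (hint _ (by fun_prop)) (hint _ hg),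
    integral_finsetSum fun i _ => hint _ (by fun_prop), mul_add, Finset.mul_sum]
  simp_rw [integral_const_mul]
  exact congrArg (· + _) (Finset.sum_congr rfl fun i _ => by ring)

theorem isBounded_range_integral_of_add_eq_smul {E : Type*} [NormedAddCommGroup E]
    [NormedSpace ℂ E] {f : ℝ → E} {P : ℝ} {z : ℂ}
    (hf : Continuous f) (hP : P ≠ 0) (hz : ‖z‖ = 1) (hz1 : z ≠ 1)
    (hfP : ∀ t, f (t + P) = z • f t) :
    IsBounded (range fun T => ∫ t in (0:ℝ)..T, f t) := by
  set F : ℝ → E := fun T => ∫ t in (0:ℝ)..T, f t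
  have hF : Continuous F := continuous_primitive (fun a b => hf.intervalIntegrable a b) 0
  have hFP : ∀ T, F (T + P) = F P + z • F T := fun T => by
    simp only [F]
    rw [← integral_add_adjacent_intervals (hf.intervalIntegrable 0 P)
      (hf.intervalIntegrable P (T + P))]
    congr 1
    rw [show ∫ t in P..T + P, f t = ∫ t in (0:ℝ)..T, f (t + P) by
      rw [integral_comp_add_right, zero_add]]
    simp_rw [hfP, integral_smul]
  -- `-(z - 1)⁻¹ • F P` is the fixed point of the affine map `v ↦ F P + z • v` in `hFP`.
  set G : ℝ → E := fun T => F T + (z - 1)⁻¹ • F P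
  have hGP : ∀ T, G (T + P) = z • G T := fun T => by
    have hz1' : z - 1 ≠ 0 := sub_ne_zero.mpr hz1
    simp only [G, hFP, smul_add, smul_smul]
    rw [add_comm (F P), add_assoc,
      show z * (z - 1)⁻¹ = 1 + (z - 1)⁻¹ by field_simp; ring, add_smul, one_smul]
  have hGper : Function.Periodic (fun T => ‖G T‖) P := fun T => by
    simp only [hGP, norm_smul, hz, one_mul]
  obtain ⟨C, hC⟩ := isBounded_iff_forall_norm_le.mp
    (hGper.isBounded_of_continuous hP (hF.add continuous_const).norm)
  refine isBounded_iff_forall_norm_le.mpr ⟨C + ‖(z - 1)⁻¹ • F P‖, ?_⟩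
  rintro _ ⟨T, rfl⟩
  have hGT : ‖G T‖ ≤ C := by simpa using hC _ (mem_range_self T)
  calc ‖F T‖ = ‖G T - (z - 1)⁻¹ • F P‖ := by simp [G]
    _ ≤ C + ‖(z - 1)⁻¹ • F P‖ := (norm_sub_le _ _).trans (by gcongr)

theorem isBounded_range_integral_cos_mul_sin_sub {ω m : ℝ} (C : ℝ) (hω : ω ≠ 0)
    (hirr : Irrational (m / ω)) :
    IsBounded (range fun T => ∫ τ in (0:ℝ)..T, cos (ω * τ) * sin (m * τ - C * sin (ω * τ))) := by
  set P := 2 * π / ω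
  have hωP : ω * P = 2 * π := by simp only [P]; field_simp
  set f : ℝ → ℂ := fun τ => cos (ω * τ) * Complex.exp ((m * τ - C * sin (ω * τ) : ℝ) * Complex.I)
  set z := Complex.exp ((m * P : ℝ) * Complex.I)
  have hz1 : z ≠ 1 := by
    rintro hz
    obtain ⟨k, hk⟩ := Complex.exp_eq_one_iff.mp hz
    have hmP : ((m * P : ℝ) : ℂ) = ((k * (2 * π) : ℝ) : ℂ) :=
      mul_right_cancel₀ Complex.I_ne_zero (by rw [hk]; push_cast; ring)
    refine hirr.ne_int k ?_
    rw [show m / ω = m * P / (2 * π) by simp only [P]; field_simp, Complex.ofReal_inj.mp hmP]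
    field_simp
  have hfP : ∀ τ, f (τ + P) = z • f τ := fun τ => by
    have hωτ : ω * (τ + P) = ω * τ + 2 * π := by rw [mul_add, hωP]
    have harg : m * (τ + P) - C * sin (ω * (τ + P)) = m * P + (m * τ - C * sin (ω * τ)) := by
      rw [hωτ, sin_add_two_pi]; ring
    simp only [f, z, smul_eq_mul]
    rw [harg, hωτ, cos_add_two_pi, Complex.ofReal_add, add_mul, Complex.exp_add]
    ring
  obtain ⟨K, hK⟩ := isBounded_iff_forall_norm_le.mp <|
    isBounded_range_integral_of_add_eq_smul (by fun_prop) (by positivity)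
      (Complex.norm_exp_ofReal_mul_I _) hz1 hfP
  refine isBounded_iff_forall_norm_le.mpr ⟨K, ?_⟩
  rintro _ ⟨T, rfl⟩
  have him : ∫ τ in (0:ℝ)..T, cos (ω * τ) * sin (m * τ - C * sin (ω * τ))
      = (∫ τ in (0:ℝ)..T, f τ).im := by
    rw [← Complex.imCLM_apply, ← ContinuousLinearMap.intervalIntegral_comp_comm _
      ((show Continuous f by fun_prop).intervalIntegrable 0 T)]
    simp only [f, Complex.imCLM_apply, Complex.im_ofReal_mul, Complex.exp_ofReal_mul_I_im]
  simp only [norm_eq_abs, him]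
  exact (Complex.abs_im_le_norm _).trans (hK _ (mem_range_self T))

theorem tendsto_one_div_mul_integral_cos_mul_sin_sub {ω m : ℝ} (C : ℝ) (hω : ω ≠ 0)
    (hirr : Irrational (m / ω)) :
    Tendsto (fun T => 1 / T * ∫ τ in (0:ℝ)..T, cos (ω * τ) * sin (m * τ - C * sin (ω * τ)))
      atTop (𝓝 0) := by
  simpa using tendsto_one_div_mul_of_isBounded_range_sub (L := 0)
    (by simpa using isBounded_range_integral_cos_mul_sin_sub C hω hirr)

theorem Function.Periodic.isBounded_range_integral_sub_mul {g : ℝ → ℝ} {c : ℝ}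
    (hg : Function.Periodic g c) (hc : c ≠ 0) (hcont : Continuous g) :
    IsBounded (range fun T => (∫ t in (0:ℝ)..T, g t) - (∫ t in (0:ℝ)..c, g t) / c * T) := by
  refine Function.Periodic.isBounded_of_continuous (fun T => ?_) hc
    ((continuous_primitive (fun a b => hcont.intervalIntegrable a b) 0).sub (by fun_prop))
  rw [hg.intervalIntegral_add_eq_add 0 T (fun a b => hcont.intervalIntegrable a b), zero_add]
  field_simp
  ring

theorem Function.Periodic.tendsto_one_div_mul_integral {g : ℝ → ℝ} {c : ℝ}
    (hg : Function.Periodic g c) (hc : c ≠ 0) (hcont : Continuous g) :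
    Tendsto (fun T => 1 / T * ∫ t in (0:ℝ)..T, g t) atTop (𝓝 ((∫ t in (0:ℝ)..c, g t) / c)) :=
  tendsto_one_div_mul_of_isBounded_range_sub (hg.isBounded_range_integral_sub_mul hc hcont)

theorem Function.Periodic.tendsto_one_div_mul_integral_comp_mul {G : ℝ → ℝ} {c ω : ℝ}
    (hG : Function.Periodic G c) (hc : c ≠ 0) (hcont : Continuous G) (hω : 0 < ω) :
    Tendsto (fun T => 1 / T * ∫ τ in (0:ℝ)..T, G (ω * τ)) atTop
      (𝓝 ((∫ ψ in (0:ℝ)..c, G ψ) / c)) := by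
  refine ((hG.tendsto_one_div_mul_integral hc hcont).comp
    (tendsto_id.const_mul_atTop hω)).congr fun T => ?_
  simp only [Function.comp, id, integral_comp_mul_left G hω.ne', mul_zero, smul_eq_mul]
  field_simp

theorem integral_sin_pow_mul_cos_zero_two_pi (k : ℕ) :
    ∫ ψ in (0:ℝ)..2 * π, sin ψ ^ k * cos ψ = 0 := by
  simpa using integral_sin_pow_mul_cos_pow_odd (a := 0) (b := 2 * π) k 0

theorem integral_cos_mul_neg_mul_sub_sin_add_sin_pow_three {u : ℝ → ℝ} (hu : Continuous u)
    (a b c : ℝ) :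
    ∫ ψ in (0:ℝ)..2 * π, cos ψ * (-(a * u ψ) - b * sin ψ + c * sin ψ ^ 3)
      = -a * ∫ ψ in (0:ℝ)..2 * π, cos ψ * u ψ := by
  have hsplit : ∀ ψ, cos ψ * (-(a * u ψ) - b * sin ψ + c * sin ψ ^ 3)
      = -a * (cos ψ * u ψ) + (c * (sin ψ ^ 3 * cos ψ) - b * (sin ψ ^ 1 * cos ψ)) :=
    fun ψ => by ring
  have hint : ∀ v : ℝ → ℝ, Continuous v → IntervalIntegrable v MeasureTheory.volume 0 (2 * π) :=
    fun v hv => hv.intervalIntegrable _ _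
  simp_rw [hsplit]
  rw [integral_add (hint _ (by fun_prop)) (hint _ (by fun_prop)),
    integral_sub (hint _ (by fun_prop)) (hint _ (by fun_prop)), integral_const_mul,
    integral_const_mul, integral_const_mul, integral_sin_pow_mul_cos_zero_two_pi,
    integral_sin_pow_mul_cos_zero_two_pi]
  ring

theorem growth_rate_M1c_general
    (ω n : ℝ) (hω : 0 < ω) (hirr : Irrational (ω / n))
    (I₀ : Finset ℤ) (hI₀ : ∀ i ∈ I₀, i ≠ 0) (B : ℤ → ℝ)
    (γ μ A₃ C₀ : ℝ) (Φ : ℝ → ℝ) (hΦ : Continuous Φ) :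
    Tendsto (fun T : ℝ => (1 / T) * ∫ τ in (0:ℝ)..T,
        Real.cos (ω * τ) *
          (2 * ∑ i ∈ I₀, B i * Real.sin ((i : ℝ) * n * τ - C₀ * Real.sin (ω * τ))
            - 2 * γ * Φ (C₀ * ω * Real.cos (ω * τ))
            - μ * C₀ * Real.sin (ω * τ)
            + (A₃ / 3) * C₀ ^ 3 * (Real.sin (ω * τ)) ^ 3)) atTop
      (nhds (-(γ / Real.pi) *
        ∫ ψ in (0:ℝ)..(2 * Real.pi), Real.cos ψ * Φ (C₀ * ω * Real.cos ψ))) := by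
  set G : ℝ → ℝ := fun ψ => cos ψ *
    (-(2 * γ * Φ (C₀ * ω * cos ψ)) - μ * C₀ * sin ψ + A₃ / 3 * C₀ ^ 3 * sin ψ ^ 3) with hG
  have hosc : ∀ i ∈ I₀, Tendsto (fun T => 1 / T * ∫ τ in (0:ℝ)..T,
      cos (ω * τ) * sin (i * n * τ - C₀ * sin (ω * τ))) atTop (𝓝 0) := fun i hi =>
    tendsto_one_div_mul_integral_cos_mul_sin_sub C₀ hω.ne'
      (by simpa only [inv_div, mul_div_assoc] using hirr.inv.intCast_mul (hI₀ i hi))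
  have hGper : Function.Periodic G (2 * π) := fun ψ => by
    simp only [hG, cos_add_two_pi, sin_add_two_pi]
  have hmean : (∫ ψ in (0:ℝ)..2 * π, G ψ) / (2 * π)
      = -(γ / π) * ∫ ψ in (0:ℝ)..2 * π, cos ψ * Φ (C₀ * ω * cos ψ) := by
    rw [hG, integral_cos_mul_neg_mul_sub_sin_add_sin_pow_three (by fun_prop)]
    ring
  have hlim := (tendsto_finsetSum I₀ fun i hi => (hosc i hi).const_mul (2 * B i)).add
    (hGper.tendsto_one_div_mul_integral_comp_mul two_pi_pos.ne' (by fun_prop) hω)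
  simp only [hmean, mul_zero, Finset.sum_const_zero, zero_add] at hlim
  refine hlim.congr fun T => ?_
  rw [← one_div_mul_integral_sum_mul_add I₀ _ (fun i => ?_) ?_]
  · refine congrArg _ (integral_congr fun τ _ => ?_)
    have hsum : ∑ i ∈ I₀, 2 * B i * (cos (ω * τ) * sin (i * n * τ - C₀ * sin (ω * τ)))
        = cos (ω * τ) * (2 * ∑ i ∈ I₀, B i * sin (i * n * τ - C₀ * sin (ω * τ))) := by
      rw [Finset.mul_sum, Finset.mul_sum]
      exact Finset.sum_congr rfl fun i _ => by ring
    rw [hG]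
    linear_combination hsum
  all_goals fun_prop

/-- Equation (5.14a): the linear growth rate `I_{1,c}` of `M_{1,c}(T)` in the first step
of the iteration for the quasi-periodic attractor near the 3:2 resonance. -/
theorem growth_rate_M1c
    (ω n : ℝ) (hω : 0 < ω) (hn : 0 < n) (hirr : Irrational (ω / n))
    (I₀ : Finset ℤ) (hI₀ : ∀ i ∈ I₀, i ≠ 0) (B : ℤ → ℝ)
    (γ μ A₃ C₀ : ℝ) (Φ : ℝ → ℝ) (hΦ : Continuous Φ) :
    Tendsto (fun T : ℝ => (1 / T) * ∫ τ in (0:ℝ)..T,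
        Real.cos (ω * τ) *
          (2 * ∑ i ∈ I₀, B i * Real.sin ((i : ℝ) * n * τ - C₀ * Real.sin (ω * τ))
            - 2 * γ * Φ (C₀ * ω * Real.cos (ω * τ))
            - μ * C₀ * Real.sin (ω * τ)
            + (A₃ / 3) * C₀ ^ 3 * (Real.sin (ω * τ)) ^ 3)) atTop
      (nhds (-(γ / Real.pi) *
        ∫ ψ in (0:ℝ)..(2 * Real.pi), Real.cos ψ * Φ (C₀ * ω * Real.cos ψ))) :=
  growth_rate_M1c_general ω n hω hirr I₀ hI₀ B γ μ A₃ C₀ Φ hΦ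
end

section
/- Let ω, n > 0 with ω/n irrational, let I₀ be a finite set of nonzero integers, B : I₀ → ℝ, and let γ, μ, A₃, C₀ ∈ ℝ and Φ : ℝ → ℝ be continuous. Then lim_{T→+∞} (1/T) ∫₀ᵀ sin(ωτ) [ 2 Σ_{i∈I₀} B_i sin(i n τ − C₀ sin(ωτ)) − 2γ Φ(C₀ ω cos(ωτ)) − μ C₀ sin(ωτ) + (A₃/3) C₀³ sin³(ωτ) ] dτ = −(1/2) μ C₀ + (A₃/8) C₀³. -/
/-!
Split the integrand into the resonant terms `sin (ω τ) * sin (m n τ - C₀ sin (ω τ))`, `m ∈ I₀`,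
and `q (ω τ)` with `q` continuous and `2π`-periodic.

For continuous `p`-periodic `g`, `x ↦ ∫₀ˣ g - (x / p) ∫₀ᵖ g` is continuous and periodic, hence
bounded, so the time average of `g (ω τ)` is the mean of `g` over one period. For `q` this mean is
`-μ C₀ / 2 + A₃ C₀³ / 8`: the `Φ`-term is odd under `θ ↦ -θ`, and `sin²`, `sin⁴` have means
`1/2`, `3/8`.

A resonant term is the imaginary part of `exp (i a τ) G (ω τ)` with `a = m n` and `G` continuous
and `2π`-periodic. Approximating `G` uniformly by trigonometric polynomials (density of the Fourier
basis) reduces it to exponentials `exp (i (a + k ω) τ)`, whose frequencies `a + k ω` are nonzero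
because `ω / n` is irrational; hence their time averages vanish.
-/

open Filter Topology Function Real

section TimeAverage

variable {E : Type*} [NormedAddCommGroup E] [NormedSpace ℝ E]

def HasTimeAverage (f : ℝ → E) (c : E) : Prop :=
  Tendsto (fun T : ℝ => T⁻¹ • ∫ τ in (0 : ℝ)..T, f τ) atTop (𝓝 c)

namespace HasTimeAverage

variable {f g : ℝ → E} {c d : E}

theorem of_norm_integral_sub_le {M : ℝ} (h : ∀ T, ‖(∫ τ in (0 : ℝ)..T, f τ) - T • c‖ ≤ M) :
    HasTimeAverage f c := by
  have hdecay : Tendsto (fun T : ℝ => T⁻¹ • ((∫ τ in (0 : ℝ)..T, f τ) - T • c)) atTop (𝓝 0) := by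
    refine squeeze_zero_norm' (a := fun T => M / T) ?_
      (tendsto_const_nhds.div_atTop tendsto_id)
    filter_upwards [eventually_gt_atTop 0] with T hT
    rw [norm_smul, norm_inv, Real.norm_of_nonneg hT.le, inv_mul_eq_div]
    exact div_le_div_of_nonneg_right (h T) hT.le
  refine (zero_add c ▸ hdecay.add_const c).congr' ?_
  filter_upwards [eventually_ne_atTop 0] with T hT
  rw [smul_sub, smul_smul, inv_mul_cancel₀ hT, one_smul, sub_add_cancel]

theorem add (hf : HasTimeAverage f c) (hg : HasTimeAverage g d) (hfc : Continuous f)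
    (hgc : Continuous g) : HasTimeAverage (fun τ => f τ + g τ) (c + d) := by
  refine (Tendsto.add hf hg).congr fun T => ?_
  rw [intervalIntegral.integral_add (hfc.intervalIntegrable _ _) (hgc.intervalIntegrable _ _),
    smul_add]

theorem const_smul {𝕜 : Type*} [NontriviallyNormedField 𝕜] [NormedSpace 𝕜 E]
    [SMulCommClass ℝ 𝕜 E] (hf : HasTimeAverage f c) (r : 𝕜) :
    HasTimeAverage (fun τ => r • f τ) (r • c) := by
  refine (Tendsto.const_smul hf r).congr fun T => ?_
  rw [intervalIntegral.integral_smul, smul_comm T⁻¹]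

theorem finsetSum {ι : Type*} (s : Finset ι) {f : ι → ℝ → E} {c : ι → E}
    (hf : ∀ i ∈ s, HasTimeAverage (f i) (c i)) (hfc : ∀ i ∈ s, Continuous (f i)) :
    HasTimeAverage (fun τ => ∑ i ∈ s, f i τ) (∑ i ∈ s, c i) := by
  refine (tendsto_finsetSum s hf).congr fun T => ?_
  rw [intervalIntegral.integral_finsetSum fun i hi => (hfc i hi).intervalIntegrable _ _,
    Finset.smul_sum]

theorem map [CompleteSpace E] {F : Type*} [NormedAddCommGroup F] [NormedSpace ℝ F]
    [CompleteSpace F] (L : E →L[ℝ] F)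
    (hf : HasTimeAverage f c) (hfc : Continuous f) :
    HasTimeAverage (fun τ => L (f τ)) (L c) := by
  refine ((L.continuous.tendsto c).comp hf).congr fun T => ?_
  rw [comp_apply, map_smul, ← L.intervalIntegral_comp_comm (hfc.intervalIntegrable _ _)]

theorem of_uniform_approx (hfc : Continuous f)
    (h : ∀ ε > 0, ∃ g : ℝ → E, Continuous g ∧ (∀ τ, ‖f τ - g τ‖ ≤ ε) ∧
      HasTimeAverage g c) :
    HasTimeAverage f c := by
  refine Metric.tendsto_nhds.2 fun ε hε => ?_
  obtain ⟨g, hgc, hfg, hg⟩ := h (ε / 2) (half_pos hε)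
  filter_upwards [eventually_gt_atTop 0, Metric.tendsto_nhds.1 hg (ε / 2) (half_pos hε)]
    with T hT hgT
  have hdiff : ‖T⁻¹ • ∫ τ in (0 : ℝ)..T, f τ - g τ‖ ≤ ε / 2 := by
    rw [norm_smul, norm_inv, Real.norm_of_nonneg hT.le, inv_mul_le_iff₀ hT, mul_comm]
    simpa [abs_of_pos hT] using
      intervalIntegral.norm_integral_le_of_norm_le_const (a := 0) (b := T) fun τ _ => hfg τ
  calc dist (T⁻¹ • ∫ τ in (0 : ℝ)..T, f τ) c
      ≤ ‖T⁻¹ • ∫ τ in (0 : ℝ)..T, f τ - g τ‖ + dist (T⁻¹ • ∫ τ in (0 : ℝ)..T, g τ) c := by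
        rw [intervalIntegral.integral_sub (hfc.intervalIntegrable _ _)
          (hgc.intervalIntegrable _ _), smul_sub, ← dist_eq_norm]
        exact dist_triangle _ _ _
    _ < ε := by linarith

end HasTimeAverage

end TimeAverage

theorem Function.Periodic.hasTimeAverage_comp_mul {E : Type*} [NormedAddCommGroup E]
    [NormedSpace ℝ E] {g : ℝ → E} {p : ℝ} (hg : Periodic g p) (hp : p ≠ 0) (hgc : Continuous g)
    {ω : ℝ} (hω : ω ≠ 0) :
    HasTimeAverage (fun τ => g (ω * τ)) (p⁻¹ • ∫ θ in (0 : ℝ)..p, g θ) := by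
  set I := ∫ θ in (0 : ℝ)..p, g θ
  set R : ℝ → E := fun x => (∫ θ in (0 : ℝ)..x, g θ) - (p⁻¹ * x) • I
  have hRper : Periodic R p := fun x => by
    simp only [R]
    rw [hg.intervalIntegral_add_eq_add 0 x fun _ _ => hgc.intervalIntegrable _ _, zero_add,
      mul_add, inv_mul_cancel₀ hp, add_smul, one_smul]
    abel
  have hRc : Continuous R :=
    (intervalIntegral.continuous_primitive (fun _ _ => hgc.intervalIntegrable _ _) 0).sub
      (by fun_prop)
  obtain ⟨C, hC⟩ := isBounded_iff_forall_norm_le.1 (hRper.isBounded_of_continuous hp hRc)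
  refine HasTimeAverage.of_norm_integral_sub_le (M := ‖ω⁻¹‖ * C) fun T => ?_
  have hR : (∫ τ in (0 : ℝ)..T, g (ω * τ)) - T • p⁻¹ • I = ω⁻¹ • R (ω * T) := by
    simp only [R, intervalIntegral.integral_comp_mul_left _ hω, mul_zero]
    rw [smul_sub, smul_smul, smul_smul]
    congr 2
    field_simp
  rw [hR, norm_smul]
  exact mul_le_mul_of_nonneg_left (hC _ ⟨_, rfl⟩) (norm_nonneg _)

theorem integral_sin_sq_zero_two_pi : ∫ θ in (0 : ℝ)..2 * π, sin θ ^ 2 = π := by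
  simp [integral_sin_sq]

theorem integral_sin_pow_four_zero_two_pi : ∫ θ in (0 : ℝ)..2 * π, sin θ ^ 4 = 3 * π / 4 := by
  have hreduction := integral_sin_pow (a := 0) (b := 2 * π) 2
  norm_num [integral_sin_sq_zero_two_pi] at hreduction
  linarith

theorem integral_sin_mul_comp_cos_zero_two_pi {Φ : ℝ → ℝ} (hΦ : Continuous Φ) :
    ∫ θ in (0 : ℝ)..2 * π, sin θ * Φ (cos θ) = 0 := by
  have h := intervalIntegral.integral_comp_mul_deriv (a := 0) (b := 2 * π)
    (fun θ _ => hasDerivAt_cos θ) (by fun_prop) hΦ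
  simp only [cos_zero, cos_two_pi, intervalIntegral.integral_same, comp_apply, mul_neg,
    intervalIntegral.integral_neg, neg_eq_zero] at h
  simpa only [mul_comm] using h

theorem Function.Periodic.exists_norm_sub_sum_exp_le {g : ℝ → ℂ} (hg : Periodic g (2 * π))
    (hgc : Continuous g) {ε : ℝ} (hε : 0 < ε) :
    ∃ (s : Finset ℤ) (c : ℤ → ℂ), ∀ θ : ℝ,
      ‖g θ - ∑ k ∈ s, c k * Complex.exp (↑(k * θ) * Complex.I)‖ ≤ ε := by
  have : Fact (0 < 2 * π) := ⟨two_pi_pos⟩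
  let G : C(AddCircle (2 * π), ℂ) := ⟨hg.lift, continuous_coinduced_dom.2 hgc⟩
  have hG : G ∈ closure (Submodule.span ℂ (Set.range (fourier (T := 2 * π))) : Set _) := by
    rw [← Submodule.topologicalClosure_coe, span_fourier_closure_eq_top]
    trivial
  obtain ⟨P, hP, hGP⟩ := Metric.mem_closure_iff.1 hG ε hε
  obtain ⟨c, hc⟩ := Finsupp.mem_span_range_iff_exists_finsupp.1 hP
  refine ⟨c.support, c, fun θ => ?_⟩
  have hPθ : P θ = ∑ k ∈ c.support, c k * Complex.exp (↑(k * θ) * Complex.I) := by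
    simp only [← hc, Finsupp.sum, ContinuousMap.coe_sum, Finset.sum_apply, ContinuousMap.coe_smul,
      Pi.smul_apply, smul_eq_mul, fourier_coe_apply]
    refine Finset.sum_congr rfl fun k _ => ?_
    congr 2
    push_cast
    field_simp
  calc ‖g θ - ∑ k ∈ c.support, c k * Complex.exp (↑(k * θ) * Complex.I)‖
      = ‖(G - P) θ‖ := by rw [ContinuousMap.sub_apply, hPθ]; rfl
    _ ≤ ε := ((G - P).norm_coe_le_norm _).trans ((dist_eq_norm G P).symm.le.trans hGP.le)

theorem hasTimeAverage_exp_mul_I {b : ℝ} (hb : b ≠ 0) :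
    HasTimeAverage (fun τ => Complex.exp (↑(b * τ) * Complex.I)) 0 := by
  have hper : Periodic (fun θ : ℝ => Complex.exp (↑θ * Complex.I)) (2 * π) := fun θ => by
    simp only [Complex.ofReal_add, Complex.ofReal_mul, add_mul, Complex.exp_add,
      Complex.exp_two_pi_mul_I, mul_one, Complex.ofReal_ofNat]
  have hmean : ∫ θ in (0 : ℝ)..2 * π, Complex.exp (↑θ * Complex.I) = 0 := by
    simp only [mul_comm _ Complex.I]
    rw [integral_exp_mul_complex Complex.I_ne_zero]
    simp [mul_comm Complex.I, Complex.exp_two_pi_mul_I]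
  simpa [hmean] using hper.hasTimeAverage_comp_mul two_pi_pos.ne' (by fun_prop) hb

theorem Function.Periodic.hasTimeAverage_exp_mul_comp_mul {g : ℝ → ℂ} (hg : Periodic g (2 * π))
    (hgc : Continuous g) {a ω : ℝ} (ha : ∀ k : ℤ, a + k * ω ≠ 0) :
    HasTimeAverage (fun τ => Complex.exp (↑(a * τ) * Complex.I) * g (ω * τ)) 0 := by
  refine HasTimeAverage.of_uniform_approx (by fun_prop) fun ε hε => ?_
  obtain ⟨s, c, hsc⟩ := hg.exists_norm_sub_sum_exp_le hgc hε
  refine ⟨fun τ => ∑ k ∈ s, c k • Complex.exp (↑((a + k * ω) * τ) * Complex.I), by fun_prop,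
    fun τ => ?_, ?_⟩
  · have hfactor : ∑ k ∈ s, c k • Complex.exp (↑((a + k * ω) * τ) * Complex.I) =
        Complex.exp (↑(a * τ) * Complex.I) *
          ∑ k ∈ s, c k * Complex.exp (↑(k * (ω * τ)) * Complex.I) := by
      rw [Finset.mul_sum]
      refine Finset.sum_congr rfl fun k _ => ?_
      rw [smul_eq_mul, mul_left_comm, ← Complex.exp_add]
      push_cast
      ring_nf
    dsimp only
    rw [hfactor, ← mul_sub, norm_mul, Complex.norm_exp_ofReal_mul_I, one_mul]
    exact hsc (ω * τ)
  · simpa using HasTimeAverage.finsetSum s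
      (fun k _ => (hasTimeAverage_exp_mul_I (ha k)).const_smul (c k)) fun k _ => by fun_prop

theorem hasTimeAverage_sin_mul_sin_sub {a ω : ℝ} (ha : ∀ k : ℤ, a + k * ω ≠ 0) (C : ℝ) :
    HasTimeAverage (fun τ => sin (ω * τ) * sin (a * τ - C * sin (ω * τ))) 0 := by
  set g : ℝ → ℂ := fun θ => ↑(sin θ) * Complex.exp (↑(-(C * sin θ)) * Complex.I)
  have hg : Periodic g (2 * π) := fun θ => by simp only [g, sin_periodic θ]
  have h := (hg.hasTimeAverage_exp_mul_comp_mul (by fun_prop) ha).map Complex.imCLM (by fun_prop)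
  convert h using 1
  · funext τ
    have hprod : Complex.exp (↑(a * τ) * Complex.I) * g (ω * τ) =
        ↑(sin (ω * τ)) * Complex.exp (↑(a * τ - C * sin (ω * τ)) * Complex.I) := by
      simp only [g, mul_left_comm _ (↑(sin (ω * τ)) : ℂ), ← Complex.exp_add]
      push_cast
      ring_nf
    rw [Complex.imCLM_apply, hprod, Complex.im_ofReal_mul, Complex.exp_ofReal_mul_I_im]
  · simp

theorem Irrational.int_mul_add_int_mul_ne_zero {ω n : ℝ} (h : Irrational (ω / n)) {i : ℤ}
    (hi : i ≠ 0) (k : ℤ) : i * n + k * ω ≠ 0 := by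
  intro hzero
  have hn : n ≠ 0 := (div_ne_zero_iff.1 h.ne_zero).2
  rcases eq_or_ne k 0 with rfl | hk
  · simp_all
  · refine h ⟨-i / k, ?_⟩
    push_cast
    field_simp
    linarith

theorem Irrational.hasTimeAverage_sin_mul_sum_sin {ω n : ℝ} (hirr : Irrational (ω / n))
    {I₀ : Finset ℤ} (hI₀ : ∀ i ∈ I₀, i ≠ 0) (B : ℤ → ℝ) (C : ℝ) :
    HasTimeAverage (fun τ => sin (ω * τ) * ∑ i ∈ I₀, B i * sin (i * n * τ - C * sin (ω * τ)))
      0 := by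
  have h := HasTimeAverage.finsetSum I₀ (fun i hi =>
    (hasTimeAverage_sin_mul_sin_sub (hirr.int_mul_add_int_mul_ne_zero (hI₀ i hi)) C).const_smul
      (B i)) fun i _ => by fun_prop
  simp only [smul_eq_mul, mul_zero, Finset.sum_const_zero] at h
  convert h using 1
  funext τ
  rw [Finset.mul_sum]
  exact Finset.sum_congr rfl fun i _ => by ring

theorem integral_zero_two_pi_sin_mul {Φ : ℝ → ℝ} (hΦ : Continuous Φ) (a b c : ℝ) :
    ∫ θ in (0 : ℝ)..2 * π, sin θ * (a * Φ (cos θ) + b * sin θ + c * sin θ ^ 3) =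
      π * (b + 3 * c / 4) := by
  have hsplit : ∀ θ, sin θ * (a * Φ (cos θ) + b * sin θ + c * sin θ ^ 3) =
      a * (sin θ * Φ (cos θ)) + b * sin θ ^ 2 + c * sin θ ^ 4 := fun θ => by ring
  simp only [hsplit]
  rw [intervalIntegral.integral_add, intervalIntegral.integral_add,
    intervalIntegral.integral_const_mul, intervalIntegral.integral_const_mul,
    intervalIntegral.integral_const_mul, integral_sin_mul_comp_cos_zero_two_pi hΦ,
    integral_sin_sq_zero_two_pi, integral_sin_pow_four_zero_two_pi]
  · ring
  all_goals exact Continuous.intervalIntegrable (by fun_prop) _ _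

theorem growth_rate_M1s_general
    (ω n : ℝ) (hirr : Irrational (ω / n))
    (I₀ : Finset ℤ) (hI₀ : ∀ i ∈ I₀, i ≠ 0) (B : ℤ → ℝ)
    (γ μ A₃ C₀ : ℝ) (Φ : ℝ → ℝ) (hΦ : Continuous Φ) :
    Tendsto (fun T : ℝ => (1 / T) * ∫ τ in (0:ℝ)..T,
        Real.sin (ω * τ) *
          (2 * ∑ i ∈ I₀, B i * Real.sin ((i : ℝ) * n * τ - C₀ * Real.sin (ω * τ))
            - 2 * γ * Φ (C₀ * ω * Real.cos (ω * τ))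
            - μ * C₀ * Real.sin (ω * τ)
            + (A₃ / 3) * C₀ ^ 3 * (Real.sin (ω * τ)) ^ 3)) atTop
      (nhds (-(1 / 2) * μ * C₀ + (A₃ / 8) * C₀ ^ 3)) := by
  have hω : ω ≠ 0 := (div_ne_zero_iff.1 hirr.ne_zero).1
  have hres := (hirr.hasTimeAverage_sin_mul_sum_sin hI₀ B C₀).const_smul (2 : ℝ)
  set q : ℝ → ℝ := fun θ => sin θ *
    (-(2 * γ) * Φ (C₀ * ω * cos θ) + -(μ * C₀) * sin θ + A₃ / 3 * C₀ ^ 3 * sin θ ^ 3)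
  have hq : Periodic q (2 * π) := fun θ => by simp only [q, sin_periodic θ, cos_periodic θ]
  have hqavg := hq.hasTimeAverage_comp_mul two_pi_pos.ne' (by fun_prop) hω
  have hqint : ∫ θ in (0 : ℝ)..2 * π, q θ = π * (-(μ * C₀) + 3 * (A₃ / 3 * C₀ ^ 3) / 4) :=
    integral_zero_two_pi_sin_mul (Φ := fun x => Φ (C₀ * ω * x)) (by fun_prop) _ _ _
  rw [hqint] at hqavg
  have htotal := hres.add hqavg (by fun_prop) (by fun_prop)
  simp only [HasTimeAverage, smul_eq_mul] at htotal
  convert htotal using 2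
  · rw [one_div]
    congr 1
    refine intervalIntegral.integral_congr fun τ _ => ?_
    simp only [q]
    ring
  · field_simp
    ring

/-- Equation (5.14b): the linear growth rate `I_{1,s}` of `M_{1,s}(T)` in the first step
of the iteration for the quasi-periodic attractor near the 3:2 resonance. -/
theorem growth_rate_M1s
    (ω n : ℝ) (hω : 0 < ω) (hn : 0 < n) (hirr : Irrational (ω / n))
    (I₀ : Finset ℤ) (hI₀ : ∀ i ∈ I₀, i ≠ 0) (B : ℤ → ℝ)
    (γ μ A₃ C₀ : ℝ) (Φ : ℝ → ℝ) (hΦ : Continuous Φ) :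
    Tendsto (fun T : ℝ => (1 / T) * ∫ τ in (0:ℝ)..T,
        Real.sin (ω * τ) *
          (2 * ∑ i ∈ I₀, B i * Real.sin ((i : ℝ) * n * τ - C₀ * Real.sin (ω * τ))
            - 2 * γ * Φ (C₀ * ω * Real.cos (ω * τ))
            - μ * C₀ * Real.sin (ω * τ)
            + (A₃ / 3) * C₀ ^ 3 * (Real.sin (ω * τ)) ^ 3)) atTop
      (nhds (-(1 / 2) * μ * C₀ + (A₃ / 8) * C₀ ^ 3)) :=
  growth_rate_M1s_general ω n hirr I₀ hI₀ B γ μ A₃ C₀ Φ hΦ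
end

section
/- Let ω, n > 0, let I₀ be a finite set of nonzero integers with (i n)² ≠ ω² for all i ∈ I₀, and let B : I₀ → ℝ, γ, ε, Φ₀ ∈ ℝ. Define M_c(t) := ∫₀ᵗ cos(ωτ) [ 2 Σ_{i∈I₀} B_i sin(i n τ) − 2γ Φ₀ ] dτ and M_s(t) := ∫₀ᵗ sin(ωτ) [ 2 Σ_{i∈I₀} B_i sin(i n τ) − 2γ Φ₀ ] dτ. Then for all t ∈ ℝ, (ε/ω)( sin(ωt) M_c(t) − cos(ωt) M_s(t) ) = (2εB/ω) sin(ωt) + β(n t) + ρ (cos(ωt) − 1), where B := Σ_{i∈I₀} B_i · (i n)/((i n)² − ω²), ρ := 2γεΦ₀/ω², and β(ψ) := −2ε Σ_{i∈I₀} (B_i/((i n)² − ω²)) sin(iψ). -/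
/-!
With the forcing `f τ = 2 ∑ Bᵢ sin (i n τ) - 2γΦ₀`, the combination
`sin (ω t) M_c t - cos (ω t) M_s t` equals `∫₀ᵗ sin (ω (t - τ)) f τ dτ`. It is linear in `f`, so
it suffices to evaluate it on `sin (a τ)`, where it is `(ω sin (a t) - a sin (ω t)) / (ω² - a²)`
as long as `a² ≠ ω²`, and on constants `k`, where it is `k (1 - cos (ω t)) / ω`.
-/

open Real intervalIntegral

/-- `ω` times the solution of `x'' + ω² x = f` with `x 0 = x' 0 = 0`. -/
noncomputable def oscillatorResponse (ω : ℝ) (f : ℝ → ℝ) (t : ℝ) : ℝ :=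
  sin (ω * t) * (∫ τ in (0 : ℝ)..t, cos (ω * τ) * f τ)
    - cos (ω * t) * ∫ τ in (0 : ℝ)..t, sin (ω * τ) * f τ

section

variable {ω a : ℝ}

lemma hasDerivAt_sin_const_mul (c x : ℝ) :
    HasDerivAt (fun τ => sin (c * τ)) (cos (c * x) * c) x :=
  ((hasDerivAt_id x).const_mul c).sin.congr_deriv (by simp)

lemma hasDerivAt_cos_const_mul (c x : ℝ) :
    HasDerivAt (fun τ => cos (c * τ)) (-sin (c * x) * c) x :=
  ((hasDerivAt_id x).const_mul c).cos.congr_deriv (by simp)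

lemma integral_cos_mul_mul_sin_mul (h : a ^ 2 ≠ ω ^ 2) (t : ℝ) :
    ∫ τ in (0 : ℝ)..t, cos (ω * τ) * sin (a * τ)
      = (ω * sin (ω * t) * sin (a * t) + a * cos (ω * t) * cos (a * t) - a) / (ω ^ 2 - a ^ 2) := by
  have hd : ω ^ 2 - a ^ 2 ≠ 0 := sub_ne_zero.2 h.symm
  have hderiv : ∀ x, HasDerivAt
      (fun τ => (ω * sin (ω * τ) * sin (a * τ) + a * cos (ω * τ) * cos (a * τ)) / (ω ^ 2 - a ^ 2))
      (cos (ω * x) * sin (a * x)) x := fun x => by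
    refine ((((hasDerivAt_sin_const_mul ω x).const_mul ω).mul (hasDerivAt_sin_const_mul a x)).add
      (((hasDerivAt_cos_const_mul ω x).const_mul a).mul (hasDerivAt_cos_const_mul a x))).div_const
      (ω ^ 2 - a ^ 2) |>.congr_deriv ?_
    field_simp
    ring
  rw [integral_eq_sub_of_hasDerivAt (fun x _ => hderiv x) ((by fun_prop : Continuous _).intervalIntegrable 0 t)]
  simp only [mul_zero, sin_zero, cos_zero]
  ring

lemma integral_sin_mul_mul_sin_mul (h : a ^ 2 ≠ ω ^ 2) (t : ℝ) :
    ∫ τ in (0 : ℝ)..t, sin (ω * τ) * sin (a * τ)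
      = (a * sin (ω * t) * cos (a * t) - ω * cos (ω * t) * sin (a * t)) / (ω ^ 2 - a ^ 2) := by
  have hd : ω ^ 2 - a ^ 2 ≠ 0 := sub_ne_zero.2 h.symm
  have hderiv : ∀ x, HasDerivAt
      (fun τ => (a * sin (ω * τ) * cos (a * τ) - ω * cos (ω * τ) * sin (a * τ)) / (ω ^ 2 - a ^ 2))
      (sin (ω * x) * sin (a * x)) x := fun x => by
    refine ((((hasDerivAt_sin_const_mul ω x).const_mul a).mul (hasDerivAt_cos_const_mul a x)).sub
      (((hasDerivAt_cos_const_mul ω x).const_mul ω).mul (hasDerivAt_sin_const_mul a x))).div_const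
      (ω ^ 2 - a ^ 2) |>.congr_deriv ?_
    field_simp
    ring
  rw [integral_eq_sub_of_hasDerivAt (fun x _ => hderiv x) ((by fun_prop : Continuous _).intervalIntegrable 0 t)]
  simp

lemma oscillatorResponse_sin_mul (h : a ^ 2 ≠ ω ^ 2) (t : ℝ) :
    oscillatorResponse ω (fun τ => sin (a * τ)) t
      = (ω * sin (a * t) - a * sin (ω * t)) / (ω ^ 2 - a ^ 2) := by
  rw [oscillatorResponse, integral_cos_mul_mul_sin_mul h, integral_sin_mul_mul_sin_mul h,
    mul_div_assoc', mul_div_assoc', div_sub_div_same]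
  congr 1
  linear_combination ω * sin (a * t) * sin_sq_add_cos_sq (ω * t)

lemma oscillatorResponse_const (hω : ω ≠ 0) (k t : ℝ) :
    oscillatorResponse ω (fun _ => k) t = k * (1 - cos (ω * t)) / ω := by
  simp only [oscillatorResponse, integral_mul_const, integral_comp_mul_left (fun τ => cos τ) hω,
    integral_comp_mul_left (fun τ => sin τ) hω, integral_cos, integral_sin, mul_zero, sin_zero,
    cos_zero, smul_eq_mul]
  field_simp
  linear_combination k * sin_sq_add_cos_sq (ω * t)

lemma oscillatorResponse_const_mul (c : ℝ) (f : ℝ → ℝ) (t : ℝ) :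
    oscillatorResponse ω (fun τ => c * f τ) t = c * oscillatorResponse ω f t := by
  simp only [oscillatorResponse, mul_left_comm _ c, integral_const_mul]
  ring

lemma oscillatorResponse_add {f g : ℝ → ℝ} {t : ℝ} (hf : IntervalIntegrable f MeasureTheory.volume 0 t)
    (hg : IntervalIntegrable g MeasureTheory.volume 0 t) :
    oscillatorResponse ω (f + g) t = oscillatorResponse ω f t + oscillatorResponse ω g t := by
  have hcos : ContinuousOn (fun τ => cos (ω * τ)) (Set.uIcc 0 t) := by fun_prop
  have hsin : ContinuousOn (fun τ => sin (ω * τ)) (Set.uIcc 0 t) := by fun_prop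
  simp only [oscillatorResponse, Pi.add_apply, mul_add,
    integral_add (hf.continuousOn_mul hcos) (hg.continuousOn_mul hcos),
    integral_add (hf.continuousOn_mul hsin) (hg.continuousOn_mul hsin)]
  ring

lemma oscillatorResponse_finset_sum {ι : Type*} (s : Finset ι) {f : ι → ℝ → ℝ} {t : ℝ}
    (hf : ∀ i ∈ s, IntervalIntegrable (f i) MeasureTheory.volume 0 t) :
    oscillatorResponse ω (∑ i ∈ s, f i) t = ∑ i ∈ s, oscillatorResponse ω (f i) t := by
  have hcos : ContinuousOn (fun τ => cos (ω * τ)) (Set.uIcc 0 t) := by fun_prop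
  have hsin : ContinuousOn (fun τ => sin (ω * τ)) (Set.uIcc 0 t) := by fun_prop
  simp only [oscillatorResponse, Finset.sum_apply, Finset.mul_sum,
    integral_finsetSum fun i hi => (hf i hi).continuousOn_mul hcos,
    integral_finsetSum fun i hi => (hf i hi).continuousOn_mul hsin, ← Finset.sum_sub_distrib]

lemma oscillatorResponse_sum_sin_add_const (hω : ω ≠ 0) {ι : Type*} (s : Finset ι) (c b : ι → ℝ)
    (hb : ∀ i ∈ s, b i ^ 2 ≠ ω ^ 2) (k t : ℝ) :
    oscillatorResponse ω (fun τ => ∑ i ∈ s, c i * sin (b i * τ) + k) t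
      = ∑ i ∈ s, c i * ((ω * sin (b i * t) - b i * sin (ω * t)) / (ω ^ 2 - b i ^ 2))
        + k * (1 - cos (ω * t)) / ω := by
  have hsplit : (fun τ => ∑ i ∈ s, c i * sin (b i * τ) + k)
      = (∑ i ∈ s, fun τ => c i * sin (b i * τ)) + fun _ => k := by
    ext τ
    simp only [Pi.add_apply, Finset.sum_apply]
  have hint : ∀ i ∈ s, IntervalIntegrable (fun τ => c i * sin (b i * τ)) MeasureTheory.volume 0 t :=
    fun i _ => (by fun_prop : Continuous _).intervalIntegrable _ _
  rw [hsplit, oscillatorResponse_add (IntervalIntegrable.sum s hint) intervalIntegrable_const,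
    oscillatorResponse_finset_sum s hint, oscillatorResponse_const hω]
  congr 1
  exact Finset.sum_congr rfl fun i hi => by
    rw [oscillatorResponse_const_mul, oscillatorResponse_sin_mul (hb i hi)]

end

theorem explicit_first_approximation_Xi1_general
    (ω n : ℝ) (hω : 0 < ω)
    (I₀ : Finset ℤ)
    (hres : ∀ i ∈ I₀, ((i : ℝ) * n) ^ 2 ≠ ω ^ 2)
    (B : ℤ → ℝ) (γ ε Φ₀ : ℝ)
    (Mc Ms : ℝ → ℝ)
    (hMc : ∀ t, Mc t = ∫ τ in (0:ℝ)..t,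
      Real.cos (ω * τ) * (2 * ∑ i ∈ I₀, B i * Real.sin ((i : ℝ) * n * τ) - 2 * γ * Φ₀))
    (hMs : ∀ t, Ms t = ∫ τ in (0:ℝ)..t,
      Real.sin (ω * τ) * (2 * ∑ i ∈ I₀, B i * Real.sin ((i : ℝ) * n * τ) - 2 * γ * Φ₀))
    (Bc ρ : ℝ) (β : ℝ → ℝ)
    (hBc : Bc = ∑ i ∈ I₀, B i * ((i : ℝ) * n) / (((i : ℝ) * n) ^ 2 - ω ^ 2))
    (hρ : ρ = 2 * γ * ε * Φ₀ / ω ^ 2)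
    (hβ : ∀ ψ, β ψ = -2 * ε * ∑ i ∈ I₀,
      (B i / (((i : ℝ) * n) ^ 2 - ω ^ 2)) * Real.sin ((i : ℝ) * ψ)) :
    ∀ t, (ε / ω) * (Real.sin (ω * t) * Mc t - Real.cos (ω * t) * Ms t)
      = (2 * ε * Bc / ω) * Real.sin (ω * t) + β (n * t) + ρ * (Real.cos (ω * t) - 1) := by
  intro t
  have hω₀ : ω ≠ 0 := hω.ne'
  have hforcing : (fun τ => 2 * ∑ i ∈ I₀, B i * sin ((i : ℝ) * n * τ) - 2 * γ * Φ₀)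
      = fun τ => ∑ i ∈ I₀, 2 * B i * sin ((i : ℝ) * n * τ) + -(2 * γ * Φ₀) := by
    simp only [Finset.mul_sum, mul_assoc, sub_eq_add_neg]
  have hmodes : ε / ω * ∑ i ∈ I₀, 2 * B i * ((ω * sin ((i : ℝ) * n * t) - (i : ℝ) * n * sin (ω * t))
        / (ω ^ 2 - ((i : ℝ) * n) ^ 2))
      = 2 * ε * Bc / ω * sin (ω * t) + β (n * t) := by
    simp only [hBc, hβ, Finset.mul_sum, Finset.sum_div, Finset.sum_mul, ← Finset.sum_add_distrib]
    refine Finset.sum_congr rfl fun i hi => ?_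
    have hd := sub_ne_zero.2 (hres i hi)
    rw [← mul_assoc (i : ℝ) n t, ← neg_sub (((i : ℝ) * n) ^ 2)]
    generalize (i : ℝ) * n = a at hd ⊢
    field_simp
    ring
  calc ε / ω * (sin (ω * t) * Mc t - cos (ω * t) * Ms t)
      = ε / ω * oscillatorResponse ω (fun τ => ∑ i ∈ I₀, 2 * B i * sin ((i : ℝ) * n * τ)
          + -(2 * γ * Φ₀)) t := by rw [hMc, hMs, ← hforcing, oscillatorResponse]
    _ = _ := by
      rw [oscillatorResponse_sum_sin_add_const hω₀ I₀ _ _ hres, mul_add, hmodes, hρ]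
      field_simp
      ring

/-- Equations (5.16)–(5.17): explicit computation of the first approximation `Ξ₁(t)`
of the quasi-periodic attractor near the 3:2 resonance. -/
theorem explicit_first_approximation_Xi1
    (ω n : ℝ) (hω : 0 < ω) (hn : 0 < n)
    (I₀ : Finset ℤ) (hI₀ : ∀ i ∈ I₀, i ≠ 0)
    (hres : ∀ i ∈ I₀, ((i : ℝ) * n) ^ 2 ≠ ω ^ 2)
    (B : ℤ → ℝ) (γ ε Φ₀ : ℝ)
    (Mc Ms : ℝ → ℝ)
    (hMc : ∀ t, Mc t = ∫ τ in (0:ℝ)..t,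
      Real.cos (ω * τ) * (2 * ∑ i ∈ I₀, B i * Real.sin ((i : ℝ) * n * τ) - 2 * γ * Φ₀))
    (hMs : ∀ t, Ms t = ∫ τ in (0:ℝ)..t,
      Real.sin (ω * τ) * (2 * ∑ i ∈ I₀, B i * Real.sin ((i : ℝ) * n * τ) - 2 * γ * Φ₀))
    (Bc ρ : ℝ) (β : ℝ → ℝ)
    (hBc : Bc = ∑ i ∈ I₀, B i * ((i : ℝ) * n) / (((i : ℝ) * n) ^ 2 - ω ^ 2))
    (hρ : ρ = 2 * γ * ε * Φ₀ / ω ^ 2)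
    (hβ : ∀ ψ, β ψ = -2 * ε * ∑ i ∈ I₀,
      (B i / (((i : ℝ) * n) ^ 2 - ω ^ 2)) * Real.sin ((i : ℝ) * ψ)) :
    ∀ t, (ε / ω) * (Real.sin (ω * t) * Mc t - Real.cos (ω * t) * Ms t)
      = (2 * ε * Bc / ω) * Real.sin (ω * t) + β (n * t) + ρ * (Real.cos (ω * t) - 1) :=
  explicit_first_approximation_Xi1_general ω n hω I₀ hres B γ ε Φ₀ Mc Ms hMc hMs Bc ρ β hBc hρ hβ
end

section
/- Let ζ ∈ ℝ, b ≠ 0, φ, f₀, f₁ ∈ ℝ, let K be a finite set, A : K → ℝ, and let ω_k ≠ 0 for each k ∈ K. The unique twice differentiable function f : ℝ → ℝ satisfying f''(τ) = f'(τ) − (ζ/b²) Σ_{k∈K} A_k sin(ω_k τ + φ) for all τ, f(0) = f₀ and f'(0) = f₁ is f(τ) = f₀ + f₁ (e^τ − 1) − (ζ/b²) Σ_{k∈K} (A_k/(1 + ω_k²)) [ (1/ω_k) cos(ω_k τ + φ) − sin(ω_k τ + φ) + e^τ (ω_k cos φ + sin φ) − (1 + ω_k²) cos φ / ω_k ]. 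-/
/-!
It suffices to exhibit one solution with the prescribed initial data: by uniqueness for Lipschitz
first-order equations, applied first to `f'` (which solves `y' = y - r`) and then to `f`, every
solution coincides with it. Each forcing mode `A sin (ω τ + φ)` is answered by the response
`(A / (1 + ω²)) · modeResponse ω φ`, and these superpose.
-/

open Real

theorem deriv_deriv_eq_deriv_sub_iff_eq {f g g' r : ℝ → ℝ} (hg : ∀ t, HasDerivAt g (g' t) t)
    (hg' : ∀ t, HasDerivAt g' (g' t - r t) t) :
    ((∀ t, DifferentiableAt ℝ f t) ∧ (∀ t, DifferentiableAt ℝ (deriv f) t) ∧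
      (∀ t, deriv (deriv f) t = deriv f t - r t) ∧ f 0 = g 0 ∧ deriv f 0 = g' 0) ↔ f = g := by
  constructor
  · rintro ⟨hf, hf', hode, h₀, h₀'⟩
    have hderiv : deriv f = g' :=
      ODE_solution_unique_univ (v := fun t y => y - r t) (s := fun _ => Set.univ) (t₀ := 0)
        (fun t => (LipschitzWith.id.sub (LipschitzWith.const (r t))).lipschitzOnWith)
        (fun t => ⟨hode t ▸ (hf' t).hasDerivAt, trivial⟩) (fun t => ⟨hg' t, trivial⟩) h₀'
    exact ODE_solution_unique_univ (v := fun t _ => g' t) (s := fun _ => Set.univ) (t₀ := 0)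
      (fun t => (LipschitzWith.const (g' t)).lipschitzOnWith)
      (fun t => ⟨hderiv ▸ (hf t).hasDerivAt, trivial⟩) (fun t => ⟨hg t, trivial⟩) h₀
  · rintro rfl
    have hderiv : deriv f = g' := funext fun t => (hg t).deriv
    refine ⟨fun t => (hg t).differentiableAt, fun t => hderiv ▸ (hg' t).differentiableAt,
      fun t => ?_, rfl, by rw [hderiv]⟩
    rw [hderiv, (hg' t).deriv]

/-- The solution of `y'' = y' - (1 + w²) sin (w τ + φ)` with `y 0 = y' 0 = 0`. -/
noncomputable def modeResponse (w φ τ : ℝ) : ℝ :=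
  (1 / w) * cos (w * τ + φ) - sin (w * τ + φ) + exp τ * (w * cos φ + sin φ)
    - (1 + w ^ 2) * cos φ / w

noncomputable def modeResponseDeriv (w φ τ : ℝ) : ℝ :=
  -sin (w * τ + φ) - w * cos (w * τ + φ) + exp τ * (w * cos φ + sin φ)

lemma hasDerivAt_mul_add_const (w φ τ : ℝ) : HasDerivAt (fun τ : ℝ => w * τ + φ) w τ := by
  simpa using ((hasDerivAt_id τ).const_mul w).add_const φ

theorem hasDerivAt_modeResponse {w : ℝ} (hw : w ≠ 0) (φ τ : ℝ) :
    HasDerivAt (modeResponse w φ) (modeResponseDeriv w φ τ) τ := by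
  have hcos := (hasDerivAt_cos (w * τ + φ)).comp τ (hasDerivAt_mul_add_const w φ τ)
  have hsin := (hasDerivAt_sin (w * τ + φ)).comp τ (hasDerivAt_mul_add_const w φ τ)
  have hexp := (hasDerivAt_exp τ).mul_const (w * cos φ + sin φ)
  refine ((((hcos.const_mul (1 / w)).sub hsin).add hexp).sub_const _).congr_deriv ?_
  simp only [modeResponseDeriv]
  field_simp

theorem hasDerivAt_modeResponseDeriv (w φ τ : ℝ) :
    HasDerivAt (modeResponseDeriv w φ)
      (modeResponseDeriv w φ τ + (1 + w ^ 2) * sin (w * τ + φ)) τ := by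
  have hcos := (hasDerivAt_cos (w * τ + φ)).comp τ (hasDerivAt_mul_add_const w φ τ)
  have hsin := (hasDerivAt_sin (w * τ + φ)).comp τ (hasDerivAt_mul_add_const w φ τ)
  have hexp := (hasDerivAt_exp τ).mul_const (w * cos φ + sin φ)
  refine ((hsin.neg.sub (hcos.const_mul w)).add hexp).congr_deriv ?_
  simp only [modeResponseDeriv]
  ring

theorem modeResponse_zero {w : ℝ} (hw : w ≠ 0) (φ : ℝ) : modeResponse w φ 0 = 0 := by
  simp only [modeResponse, mul_zero, zero_add, exp_zero]
  field_simp
  ring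

theorem modeResponseDeriv_zero (w φ : ℝ) : modeResponseDeriv w φ 0 = 0 := by
  simp only [modeResponseDeriv, mul_zero, zero_add, exp_zero]
  ring

open Finset in
theorem fast_component_linearized_ode_unique_solution_general
    (ζ b φ f₀ f₁ : ℝ)
    (K : Finset ℤ) (A ω : ℤ → ℝ) (hω : ∀ k ∈ K, ω k ≠ 0)
    (f : ℝ → ℝ) :
    ((∀ τ, DifferentiableAt ℝ f τ) ∧ (∀ τ, DifferentiableAt ℝ (deriv f) τ) ∧
      (∀ τ, deriv (deriv f) τ
        = deriv f τ - (ζ / b ^ 2) * ∑ k ∈ K, A k * Real.sin (ω k * τ + φ)) ∧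
      f 0 = f₀ ∧ deriv f 0 = f₁)
    ↔ (∀ τ, f τ = f₀ + f₁ * (Real.exp τ - 1) -
        (ζ / b ^ 2) * ∑ k ∈ K, (A k / (1 + (ω k) ^ 2)) *
          ((1 / ω k) * Real.cos (ω k * τ + φ) - Real.sin (ω k * τ + φ)
            + Real.exp τ * (ω k * Real.cos φ + Real.sin φ)
            - (1 + (ω k) ^ 2) * Real.cos φ / ω k)) := by
  set c := ζ / b ^ 2
  have hcancel (k : ℤ) : A k / (1 + ω k ^ 2) * (1 + ω k ^ 2) = A k :=
    div_mul_cancel₀ _ (by positivity)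
  let g' τ := f₁ * exp τ - c * ∑ k ∈ K, A k / (1 + ω k ^ 2) * modeResponseDeriv (ω k) φ τ
  have hg (τ : ℝ) := ((((hasDerivAt_exp τ).sub_const 1).const_mul f₁).const_add f₀).sub
    ((HasDerivAt.fun_sum fun k hk =>
      (hasDerivAt_modeResponse (hω k hk) φ τ).const_mul (A k / (1 + ω k ^ 2))).const_mul c)
  have hg' (τ : ℝ) : HasDerivAt g' (g' τ - c * ∑ k ∈ K, A k * sin (ω k * τ + φ)) τ := by
    refine (((hasDerivAt_exp τ).const_mul f₁).sub ((HasDerivAt.fun_sum fun k _ =>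
      (hasDerivAt_modeResponseDeriv (ω k) φ τ).const_mul _).const_mul c)).congr_deriv ?_
    simp only [g', mul_add, sum_add_distrib, ← mul_assoc, hcancel]
    ring
  have hsum₀ : ∑ k ∈ K, A k / (1 + ω k ^ 2) * modeResponse (ω k) φ 0 = 0 :=
    sum_eq_zero fun k hk => by rw [modeResponse_zero (hω k hk), mul_zero]
  have key := deriv_deriv_eq_deriv_sub_iff_eq (f := f) hg hg'
  simp only [Pi.sub_apply, exp_zero, sub_self, mul_zero, add_zero, hsum₀, sub_zero, mul_one,
    modeResponseDeriv_zero, sum_const_zero, funext_iff] at key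
  exact key

/-- Equation (4.4): the unique twice differentiable solution of the linearized equation
`f'' = f' - (ζ/b²) ∑_k A_k sin(ω_k τ + φ)` with `f(0) = f₀` and `f'(0) = f₁`. -/
theorem fast_component_linearized_ode_unique_solution
    (ζ b φ f₀ f₁ : ℝ) (hb : b ≠ 0)
    (K : Finset ℤ) (A ω : ℤ → ℝ) (hω : ∀ k ∈ K, ω k ≠ 0)
    (f : ℝ → ℝ) :
    ((∀ τ, DifferentiableAt ℝ f τ) ∧ (∀ τ, DifferentiableAt ℝ (deriv f) τ) ∧
      (∀ τ, deriv (deriv f) τ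
        = deriv f τ - (ζ / b ^ 2) * ∑ k ∈ K, A k * Real.sin (ω k * τ + φ)) ∧
      f 0 = f₀ ∧ deriv f 0 = f₁)
    ↔ (∀ τ, f τ = f₀ + f₁ * (Real.exp τ - 1) -
        (ζ / b ^ 2) * ∑ k ∈ K, (A k / (1 + (ω k) ^ 2)) *
          ((1 / ω k) * Real.cos (ω k * τ + φ) - Real.sin (ω k * τ + φ)
            + Real.exp τ * (ω k * Real.cos φ + Real.sin φ)
            - (1 + (ω k) ^ 2) * Real.cos φ / ω k)) :=
  fast_component_linearized_ode_unique_solution_general ζ b φ f₀ f₁ K A ω hω f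
end

section
/- Let ζ ∈ ℝ, b ≠ 0, φ ∈ ℝ, let K be a finite set, A : K → ℝ, and let ω_k ≠ 0 for each k ∈ K. The function f(τ) := −(ζ/b²) Σ_{k∈K} (A_k/(1 + ω_k²)) [ (cos(ω_k τ + φ) − cos φ)/ω_k − sin(ω_k τ + φ) + e^τ sin φ ] satisfies f''(τ) = f'(τ) − (ζ/b²) Σ_{k∈K} A_k sin(ω_k τ + φ) for all τ ∈ ℝ, with f(0) = 0 and f'(0) = (ζ/b²) cos φ · Σ_{k∈K} A_k ω_k/(1 + ω_k²). -/
/-!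
Write the `k`-th summand as `A_k / (1 + ω_k²) · g_{ω_k}` with `g_w = fastMode w φ`. Each `g_w`
satisfies `g'' = g' + (1 + w²) sin (w τ + φ)`, `g(0) = 0` and `g'(0) = -w cos φ`, so the
normalisation `1 + ω_k²` cancels and the three claims follow by linearity of differentiation.
-/

open Real

section LinearCombination

variable {ι : Type*} (s : Finset ι) (c : ι → ℝ) (g g' : ι → ℝ → ℝ)

theorem hasDerivAt_finset_sum_const_mul (hg : ∀ i ∈ s, ∀ τ, HasDerivAt (g i) (g' i τ) τ)
    (τ : ℝ) :
    HasDerivAt (fun τ => ∑ i ∈ s, c i * g i τ) (∑ i ∈ s, c i * g' i τ) τ :=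
  HasDerivAt.fun_sum fun i hi => (hg i hi τ).const_mul (c i)

theorem deriv_finset_sum_const_mul (hg : ∀ i ∈ s, ∀ τ, HasDerivAt (g i) (g' i τ) τ) :
    deriv (fun τ => ∑ i ∈ s, c i * g i τ) = fun τ => ∑ i ∈ s, c i * g' i τ :=
  funext fun τ => (hasDerivAt_finset_sum_const_mul s c g g' hg τ).deriv

theorem deriv_deriv_finset_sum_const_mul (r : ι → ℝ → ℝ)
    (hg : ∀ i ∈ s, ∀ τ, HasDerivAt (g i) (g' i τ) τ)
    (hg' : ∀ i ∈ s, ∀ τ, HasDerivAt (g' i) (g' i τ + r i τ) τ) (τ : ℝ) :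
    deriv (deriv fun τ => ∑ i ∈ s, c i * g i τ) τ
      = deriv (fun τ => ∑ i ∈ s, c i * g i τ) τ + ∑ i ∈ s, c i * r i τ := by
  have hsum' := hasDerivAt_finset_sum_const_mul s c g' (fun i τ => g' i τ + r i τ) hg' τ
  rw [deriv_finset_sum_const_mul s c g g' hg, hsum'.deriv, ← Finset.sum_add_distrib]
  simp only [mul_add]

end LinearCombination

section Mode

variable (w φ : ℝ)

noncomputable def fastMode (τ : ℝ) : ℝ :=
  (cos (w * τ + φ) - cos φ) / w - sin (w * τ + φ) + exp τ * sin φ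

theorem hasDerivAt_mul_add (τ : ℝ) : HasDerivAt (fun τ => w * τ + φ) w τ := by
  simpa using ((hasDerivAt_id τ).const_mul w).add_const φ

noncomputable def fastModeDeriv (τ : ℝ) : ℝ :=
  -sin (w * τ + φ) - w * cos (w * τ + φ) + exp τ * sin φ

theorem hasDerivAt_fastMode (hw : w ≠ 0) (τ : ℝ) :
    HasDerivAt (fastMode w φ) (fastModeDeriv w φ τ) τ := by
  have hlin := hasDerivAt_mul_add w φ τ
  have hcos := (hasDerivAt_cos (w * τ + φ)).comp τ hlin
  have hsin := (hasDerivAt_sin (w * τ + φ)).comp τ hlin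
  have hexp := (hasDerivAt_exp τ).mul_const (sin φ)
  refine ((((hcos.sub_const (cos φ)).div_const w).sub hsin).add hexp).congr_deriv ?_
  field_simp
  rw [fastModeDeriv]

theorem hasDerivAt_fastModeDeriv (τ : ℝ) :
    HasDerivAt (fastModeDeriv w φ)
      (fastModeDeriv w φ τ + (1 + w ^ 2) * sin (w * τ + φ)) τ := by
  have hlin := hasDerivAt_mul_add w φ τ
  have hcos := ((hasDerivAt_cos (w * τ + φ)).comp τ hlin).const_mul w
  have hsin := (hasDerivAt_sin (w * τ + φ)).comp τ hlin
  have hexp := (hasDerivAt_exp τ).mul_const (sin φ)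
  refine ((hsin.neg.sub hcos).add hexp).congr_deriv ?_
  simp only [fastModeDeriv]
  ring

theorem fastMode_zero : fastMode w φ 0 = 0 := by
  simp [fastMode]

theorem fastModeDeriv_zero : fastModeDeriv w φ 0 = -(w * cos φ) := by
  simp only [fastModeDeriv, mul_zero, zero_add, exp_zero, one_mul]
  ring

end Mode

theorem fast_component_special_solution_general
    (ζ b φ : ℝ)
    (K : Finset ℤ) (A ω : ℤ → ℝ) (hω : ∀ k ∈ K, ω k ≠ 0)
    (f : ℝ → ℝ)
    (hf : ∀ τ, f τ = -(ζ / b ^ 2) * ∑ k ∈ K, (A k / (1 + (ω k) ^ 2)) *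
      ((Real.cos (ω k * τ + φ) - Real.cos φ) / ω k - Real.sin (ω k * τ + φ)
        + Real.exp τ * Real.sin φ)) :
    (∀ τ, deriv (deriv f) τ
      = deriv f τ - (ζ / b ^ 2) * ∑ k ∈ K, A k * Real.sin (ω k * τ + φ)) ∧
    f 0 = 0 ∧
    deriv f 0 = (ζ / b ^ 2) * Real.cos φ * ∑ k ∈ K, A k * ω k / (1 + (ω k) ^ 2) := by
  set c : ℤ → ℝ := fun k => -(ζ / b ^ 2) * (A k / (1 + ω k ^ 2))
  have hf' : f = fun τ => ∑ k ∈ K, c k * fastMode (ω k) φ τ := by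
    ext τ
    simp only [hf, c, fastMode, Finset.mul_sum, mul_assoc]
  have hmode : ∀ k ∈ K, ∀ τ, HasDerivAt (fastMode (ω k) φ) (fastModeDeriv (ω k) φ τ) τ :=
    fun k hk => hasDerivAt_fastMode (ω k) φ (hω k hk)
  have hden : ∀ k, (1 : ℝ) + ω k ^ 2 ≠ 0 := fun k => by positivity
  refine ⟨fun τ => ?_, ?_, ?_⟩
  · rw [hf', deriv_deriv_finset_sum_const_mul K c _ _ _ hmode
      (fun k _ => hasDerivAt_fastModeDeriv (ω k) φ), sub_eq_add_neg, Finset.mul_sum,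
      ← Finset.sum_neg_distrib]
    congr 1
    refine Finset.sum_congr rfl fun k _ => ?_
    simp only [c]
    field_simp [hden k]
  · simp [hf', fastMode_zero]
  · rw [hf', deriv_finset_sum_const_mul K c _ _ hmode, Finset.mul_sum]
    refine Finset.sum_congr rfl fun k _ => ?_
    simp only [c, fastModeDeriv_zero]
    ring

/-- Equation (4.5): with the special choice of initial velocity, the fast component of the
pre-capture dynamics satisfies the linearized ODE with `f(0) = 0` and
`f'(0) = (ζ/b²) cos φ ∑_k A_k ω_k/(1+ω_k²)`. -/
theorem fast_component_special_solution
    (ζ b φ : ℝ) (hb : b ≠ 0)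
    (K : Finset ℤ) (A ω : ℤ → ℝ) (hω : ∀ k ∈ K, ω k ≠ 0)
    (f : ℝ → ℝ)
    (hf : ∀ τ, f τ = -(ζ / b ^ 2) * ∑ k ∈ K, (A k / (1 + (ω k) ^ 2)) *
      ((Real.cos (ω k * τ + φ) - Real.cos φ) / ω k - Real.sin (ω k * τ + φ)
        + Real.exp τ * Real.sin φ)) :
    (∀ τ, deriv (deriv f) τ
      = deriv f τ - (ζ / b ^ 2) * ∑ k ∈ K, A k * Real.sin (ω k * τ + φ)) ∧
    f 0 = 0 ∧
    deriv f 0 = (ζ / b ^ 2) * Real.cos φ * ∑ k ∈ K, A k * ω k / (1 + (ω k) ^ 2) :=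
  fast_component_special_solution_general ζ b φ K A ω hω f hf
end

section
/- Fix α ∈ (0,1) and τ_M, τ_A, 𝒜 > 0. For x ≥ 0 define 𝓘(x) := −τ_M^{−1} − x^{1−α} τ_A^{−α} sin(απ/2) Γ(α+1) and 𝓡(x) := x + x^{1−α} τ_A^{−α} cos(απ/2) Γ(α+1), where Γ is the Euler Gamma function, and for ω ∈ ℝ define Ξ(ω) := sgn(ω) · 𝓘(|ω|) |ω| / ( (𝓡(|ω|) + 𝒜 |ω|)² + 𝓘(|ω|)² ). Then Ξ is an odd continuous function on ℝ, and Ξ is differentiable at ω = 0 with Ξ'(0) = −τ_M. -/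
/-!
Factor the profile as `Ξ(ω) = ω · k(|ω|)` with `k(x) = 𝓘(x) / ((𝓡(x) + 𝒜 x)² + 𝓘(x)²)`.
Since `𝓘 < 0` on `[0, ∞)`, the denominator never vanishes and `k` is continuous there; hence `Ξ`
is odd and continuous, and its difference quotient at `0` is `k(|ω|) → k(0) = 1 / 𝓘(0) = -τ_M`
(the fractional power `x^{1-α}` vanishes at `0` because `α < 1`).
-/

open Real Set

theorem Real.sign_mul_abs (w : ℝ) : Real.sign w * |w| = w := by
  rcases lt_trichotomy w 0 with hw | rfl | hw
  · rw [Real.sign_of_neg hw, abs_of_neg hw, neg_one_mul, neg_neg]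
  · rw [abs_zero, mul_zero]
  · rw [Real.sign_of_pos hw, abs_of_pos hw, one_mul]

theorem ContinuousAt.hasDerivAt_id_mul_zero {𝕜 : Type*} [NontriviallyNormedField 𝕜] {g : 𝕜 → 𝕜}
    (hg : ContinuousAt g 0) : HasDerivAt (fun x => x * g x) (g 0) 0 := by
  rw [hasDerivAt_iff_tendsto_slope]
  refine (hg.tendsto.mono_left nhdsWithin_le_nhds).congr' ?_
  filter_upwards [self_mem_nhdsWithin] with x (hx : x ≠ 0)
  rw [slope_def_field, zero_mul, sub_zero, sub_zero, mul_div_cancel_left₀ _ hx]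

section OddExtension

variable {k : ℝ → ℝ}

theorem Function.odd_mul_comp_abs : Function.Odd fun w => w * k |w| :=
  fun w => show -w * k |-w| = -(w * k |w|) by rw [abs_neg, neg_mul]

theorem ContinuousOn.continuous_mul_comp_abs (hk : ContinuousOn k (Ici 0)) :
    Continuous fun w => w * k |w| :=
  continuous_id.mul (hk.comp_continuous continuous_abs abs_nonneg)

theorem ContinuousOn.hasDerivAt_mul_comp_abs_zero (hk : ContinuousOn k (Ici 0)) :
    HasDerivAt (fun w => w * k |w|) (k 0) 0 := by
  simpa using (hk.comp_continuous continuous_abs abs_nonneg).continuousAt.hasDerivAt_id_mul_zero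

end OddExtension

noncomputable def profileFactor (I R : ℝ → ℝ) (𝒜 x : ℝ) : ℝ :=
  I x / ((R x + 𝒜 * x) ^ 2 + I x ^ 2)

section ProfileFactor

variable {I R : ℝ → ℝ} {𝒜 : ℝ}

theorem sign_mul_div_eq_mul_profileFactor (w : ℝ) :
    Real.sign w * (I |w| * |w|) / ((R |w| + 𝒜 * |w|) ^ 2 + I |w| ^ 2)
      = w * profileFactor I R 𝒜 |w| := by
  rw [profileFactor, mul_comm (I |w|), ← mul_assoc, Real.sign_mul_abs, mul_div_assoc]

theorem continuousOn_profileFactor (hI : ContinuousOn I (Ici 0)) (hR : ContinuousOn R (Ici 0))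
    (hI_ne : ∀ x ∈ Ici (0 : ℝ), I x ≠ 0) : ContinuousOn (profileFactor I R 𝒜) (Ici 0) :=
  hI.div (by fun_prop) fun x hx => by positivity [hI_ne x hx]

theorem profileFactor_zero (hI : I 0 ≠ 0) (hR : R 0 = 0) : profileFactor I R 𝒜 0 = (I 0)⁻¹ := by
  rw [profileFactor, hR, mul_zero, add_zero, zero_pow two_ne_zero, zero_add, sq,
    div_mul_cancel_left₀ hI]

end ProfileFactor

theorem neg_inv_sub_rpow_mul_sin_mul_Gamma_neg {α τM τA x : ℝ} (hα₀ : 0 < α) (hα₂ : α < 2)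
    (hτM : 0 < τM) (hτA : 0 ≤ τA) (hx : 0 ≤ x) :
    -τM⁻¹ - x ^ (1 - α) * τA ^ (-α) * sin (α * π / 2) * Gamma (α + 1) < 0 := by
  have hsin : 0 < sin (α * π / 2) :=
    sin_pos_of_pos_of_lt_pi (by positivity) (by nlinarith [pi_pos])
  have hΓ : 0 < Gamma (α + 1) := Gamma_pos_of_pos (by linarith)
  have : 0 ≤ x ^ (1 - α) * τA ^ (-α) * sin (α * π / 2) * Gamma (α + 1) := by
    have := rpow_nonneg hx (1 - α); have := rpow_nonneg hτA (-α); positivity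
  linarith [inv_pos.mpr hτM]

theorem tidal_torque_profile_odd_continuous_deriv_at_zero_general
    (α τM τA 𝒜 : ℝ) (hα : α ∈ Set.Ioo (0:ℝ) 1)
    (hτM : 0 < τM) (hτA : 0 < τA)
    (I R : ℝ → ℝ)
    (hI : ∀ x, 0 ≤ x → I x
      = -τM⁻¹ - x ^ (1 - α) * τA ^ (-α) * Real.sin (α * Real.pi / 2) * Real.Gamma (α + 1))
    (hR : ∀ x, 0 ≤ x → R x
      = x + x ^ (1 - α) * τA ^ (-α) * Real.cos (α * Real.pi / 2) * Real.Gamma (α + 1))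
    (Ξ : ℝ → ℝ)
    (hΞ : ∀ w, Ξ w = Real.sign w * (I |w| * |w|) / ((R |w| + 𝒜 * |w|) ^ 2 + (I |w|) ^ 2)) :
    (∀ w, Ξ (-w) = -Ξ w) ∧ Continuous Ξ ∧ HasDerivAt Ξ (-τM) 0 := by
  obtain ⟨hα₀, hα₁⟩ := hα
  have hβ : 0 < 1 - α := by linarith
  have hI_neg : ∀ x : ℝ, 0 ≤ x → I x < 0 := fun x hx =>
    (hI x hx).trans_lt (neg_inv_sub_rpow_mul_sin_mul_Gamma_neg hα₀ (by linarith) hτM hτA.le hx)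
  have hIc : ContinuousOn I (Ici 0) := by
    refine ContinuousOn.congr ?_ fun x hx => hI x hx
    apply Continuous.continuousOn
    fun_prop (disch := exact hβ.le)
  have hRc : ContinuousOn R (Ici 0) := by
    refine ContinuousOn.congr ?_ fun x hx => hR x hx
    apply Continuous.continuousOn
    fun_prop (disch := exact hβ.le)
  have hk := continuousOn_profileFactor (𝒜 := 𝒜) hIc hRc fun x hx => (hI_neg x hx).ne
  have hk0 : profileFactor I R 𝒜 0 = -τM := by
    rw [profileFactor_zero (hI_neg 0 le_rfl).ne (by simp [hR 0 le_rfl, zero_rpow hβ.ne']),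
      hI 0 le_rfl, zero_rpow hβ.ne']
    simp
  obtain rfl : Ξ = fun w => w * profileFactor I R 𝒜 |w| :=
    funext fun w => (hΞ w).trans (sign_mul_div_eq_mul_profileFactor w)
  exact ⟨Function.odd_mul_comp_abs, hk.continuous_mul_comp_abs,
    hk0 ▸ hk.hasDerivAt_mul_comp_abs_zero⟩

/-- The kink-shaped profile `Ξ` of the realistic Efroimsky–Makarov tidal torque is an odd
continuous function on `ℝ`, differentiable at `0` with `Ξ'(0) = -τ_M`. -/
theorem tidal_torque_profile_odd_continuous_deriv_at_zero
    (α τM τA 𝒜 : ℝ) (hα : α ∈ Set.Ioo (0:ℝ) 1)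
    (hτM : 0 < τM) (hτA : 0 < τA) (h𝒜 : 0 < 𝒜)
    (I R : ℝ → ℝ)
    (hI : ∀ x, 0 ≤ x → I x
      = -τM⁻¹ - x ^ (1 - α) * τA ^ (-α) * Real.sin (α * Real.pi / 2) * Real.Gamma (α + 1))
    (hR : ∀ x, 0 ≤ x → R x
      = x + x ^ (1 - α) * τA ^ (-α) * Real.cos (α * Real.pi / 2) * Real.Gamma (α + 1))
    (Ξ : ℝ → ℝ)
    (hΞ : ∀ w, Ξ w = Real.sign w * (I |w| * |w|) / ((R |w| + 𝒜 * |w|) ^ 2 + (I |w|) ^ 2)) :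
    (∀ w, Ξ (-w) = -Ξ w) ∧ Continuous Ξ ∧ HasDerivAt Ξ (-τM) 0 :=
  tidal_torque_profile_odd_continuous_deriv_at_zero_general α τM τA 𝒜 hα hτM hτA I R hI hR Ξ hΞ
end
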